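/- arXiv:2001.03137 — 7 statements merged into one kernel-verified Lean document; each statement's English description precedes it below -/
import Mathlib

section
/- For every x ∈ U and all indices i, j, the first derivative of the induced metric at t = 0 is ∂g_{ij}(t)/∂t |_{t=0} = 2 (f(x) + φ'(0)) g_{ij}(x). -/
open MeasureTheory Real Set
open scoped RealInnerProductSpace

noncomputable section

abbrev En (n : ℕ) : Type := EuclideanSpace ℝ (Fin n)

/-- Partial derivative of `F` in the `i`-th coordinate direction. -/
def pd {m : ℕ} {E : Type} [NormedAddCommGroup E] [NormedSpace ℝ E]
    (i : Fin m) (F : En m → E) (x : En m) : E :=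
  fderiv ℝ F x (EuclideanSpace.single i 1)

/-- The induced (first fundamental form) metric of a map `Y : U → ℝ^{n+1}`. -/
def gmet {n : ℕ} (Y : En n → En (n + 1)) (x : En n) : Matrix (Fin n) (Fin n) ℝ :=
  Matrix.of fun i j => ⟪pd i Y x, pd j Y x⟫

/-- The variation `X(t,x) = (1 + t f(x) + φ(t)) Φ(x)`. -/
def Xvar {n : ℕ} (f : En n → ℝ) (φ : ℝ → ℝ) (Φ : En n → En (n + 1)) (t : ℝ) (x : En n) :
    En (n + 1) :=
  (1 + t * f x + φ t) • Φ x

/-- Second fundamental form `h_{ij} = ⟨∂X/∂x_i, ∂N/∂x_j⟩`. -/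
def sff {n : ℕ} (Y Nf : En n → En (n + 1)) (x : En n) : Matrix (Fin n) (Fin n) ℝ :=
  Matrix.of fun i j => ⟪pd i Y x, pd j Nf x⟫

/-- Mean curvature `H = (1/n) Σ g^{ij} h_{ij}`. -/
def Hmean {n : ℕ} (Y Nf : En n → En (n + 1)) (x : En n) : ℝ :=
  (1 / (n : ℝ)) * ∑ i, ∑ j, (gmet Y x)⁻¹ i j * sff Y Nf x i j

/-- The volume element `√(det g)`. -/
def vElem {n : ℕ} (Y : En n → En (n + 1)) (x : En n) : ℝ :=
  Real.sqrt (gmet Y x).det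

/-- `|∇u|² = Σ g^{ij} ∂_i u ∂_j u` with respect to the metric of `Φ`. -/
def gradSq {n : ℕ} (Φ : En n → En (n + 1)) (u : En n → ℝ) (x : En n) : ℝ :=
  ∑ i, ∑ j, (gmet Φ x)⁻¹ i j * pd i u x * pd j u x

/-- Tangential gradient `∇u = Σ g^{ij} ∂_i u ∂_j Φ ∈ ℝ^{n+1}`. -/
def gradV {n : ℕ} (Φ : En n → En (n + 1)) (u : En n → ℝ) (x : En n) : En (n + 1) :=
  ∑ i, ∑ j, ((gmet Φ x)⁻¹ i j * pd i u x) • pd j Φ x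

/-- Laplace–Beltrami operator `Δu = (1/√g) Σ ∂_i (√g g^{ij} ∂_j u)`. -/
def lapl {n : ℕ} (Φ : En n → En (n + 1)) (u : En n → ℝ) (x : En n) : ℝ :=
  (vElem Φ x)⁻¹ * ∑ i, ∑ j, pd i (fun y => vElem Φ y * (gmet Φ y)⁻¹ i j * pd j u y) x

/-- Christoffel symbols of the metric of `Φ`. -/
def christoffel {n : ℕ} (Φ : En n → En (n + 1)) (k i j : Fin n) (x : En n) : ℝ :=
  (1 / 2) * ∑ l, (gmet Φ x)⁻¹ k l *
    (pd i (fun y => gmet Φ y l j) x + pd j (fun y => gmet Φ y l i) x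
      - pd l (fun y => gmet Φ y i j) x)

/-- Hessian `(∇²u)_{ij} = ∂²u/∂x_i∂x_j − Σ_k Γ^k_{ij} ∂_k u`. -/
def hess {n : ℕ} (Φ : En n → En (n + 1)) (u : En n → ℝ) (x : En n) (i j : Fin n) : ℝ :=
  pd i (fun y => pd j u y) x - ∑ k, christoffel Φ k i j x * pd k u x

/-- `∂g_ij/∂t |_(t=0) = 2 (f + φ'(0)) g_ij`. -/
theorem first_variation_metric {n : ℕ} (hn : 1 ≤ n) (U : Set (En n)) (hU : IsOpen U)
    (Φ : En n → En (n + 1)) (f : En n → ℝ) (φ : ℝ → ℝ) (ε : ℝ) (hε : 0 < ε)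
    (hΦ : ContDiffOn ℝ (⊤ : ℕ∞) Φ U) (hf : ContDiffOn ℝ (⊤ : ℕ∞) f U)
    (hφ : ContDiffOn ℝ (⊤ : ℕ∞) φ (Ioo (-ε) ε)) (hφ0 : φ 0 = 0)
    (hsph : ∀ x ∈ U, ‖Φ x‖ = 1)
    (himm : ∀ x ∈ U, (gmet Φ x).PosDef) :
    ∀ x ∈ U, ∀ i j : Fin n,
      deriv (fun t => gmet (Xvar f φ Φ t) x i j) 0
        = 2 * (f x + deriv φ 0) * gmet Φ x i j := by
  intro x hx i j
  have hnx : U ∈ nhds x := hU.mem_nhds hx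
  have hΦd : DifferentiableAt ℝ Φ x :=
    ((hΦ.differentiableOn (by simp)) x hx).differentiableAt hnx
  have hfd : DifferentiableAt ℝ f x :=
    ((hf.differentiableOn (by simp)) x hx).differentiableAt hnx
  -- orthogonality : ⟪Φ x, pd k Φ x⟫ = 0
  have horth : ∀ k : Fin n, ⟪Φ x, pd k Φ x⟫ = 0 := by
    intro k
    have h1 : HasFDerivAt (fun y => (⟪Φ y, Φ y⟫ : ℝ)) (0 : En n →L[ℝ] ℝ) x := by
      have heq : (fun y => (⟪Φ y, Φ y⟫ : ℝ)) =ᶠ[nhds x] fun _ => (1 : ℝ) := by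
        filter_upwards [hnx] with y hy
        rw [real_inner_self_eq_norm_sq, hsph y hy]; norm_num
      exact (hasFDerivAt_const (1 : ℝ) x).congr_of_eventuallyEq heq
    have h2 := (hΦd.hasFDerivAt).inner ℝ (hΦd.hasFDerivAt)
    have h3 := h1.unique h2
    have h4 := congrFun (congrArg DFunLike.coe h3) (EuclideanSpace.single k 1)
    simp only [ContinuousLinearMap.zero_apply, ContinuousLinearMap.comp_apply,
      ContinuousLinearMap.prod_apply, fderivInnerCLM_apply] at h4
    have h5 : (⟪Φ x, pd k Φ x⟫ : ℝ) + ⟪Φ x, pd k Φ x⟫ = 0 := by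
      rw [pd]
      nth_rewrite 2 [real_inner_comm]
      exact h4.symm
    linarith
  have hΦΦ : (⟪Φ x, Φ x⟫ : ℝ) = 1 := by
    rw [real_inner_self_eq_norm_sq, hsph x hx]; norm_num
  -- partial derivatives of the variation
  have hpd : ∀ (t : ℝ) (k : Fin n),
      pd k (Xvar f φ Φ t) x
        = (1 + t * f x + φ t) • pd k Φ x + (t * pd k f x) • Φ x := by
    intro t k
    have hc : HasFDerivAt (fun y => 1 + t * f y + φ t)
        ((t • fderiv ℝ f x : En n →L[ℝ] ℝ)) x := by
      have h1 := ((hasFDerivAt_const (1 : ℝ) x).add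
        ((hfd.hasFDerivAt).const_mul t)).add_const (φ t)
      simpa using h1
    have hX : HasFDerivAt (Xvar f φ Φ t)
        ((1 + t * f x + φ t) • fderiv ℝ Φ x
          + ((t • fderiv ℝ f x : En n →L[ℝ] ℝ)).smulRight (Φ x)) x :=
      hc.smul hΦd.hasFDerivAt
    rw [pd, hX.fderiv]
    simp [pd, ContinuousLinearMap.smulRight_apply, smul_smul]
  -- the metric along the variation
  have hg : ∀ t : ℝ, gmet (Xvar f φ Φ t) x i j
      = (1 + t * f x + φ t) ^ 2 * gmet Φ x i j
        + t ^ 2 * (pd i f x * pd j f x) := by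
    intro t
    have hiΦ : (⟪pd i Φ x, Φ x⟫ : ℝ) = 0 := by rw [real_inner_comm]; exact horth i
    have hjΦ : (⟪Φ x, pd j Φ x⟫ : ℝ) = 0 := horth j
    show (⟪pd i (Xvar f φ Φ t) x, pd j (Xvar f φ Φ t) x⟫ : ℝ) = _
    rw [hpd t i, hpd t j]
    rw [inner_add_left, inner_add_right, inner_add_right,
      real_inner_smul_left, real_inner_smul_left, real_inner_smul_left,
      real_inner_smul_left, real_inner_smul_right, real_inner_smul_right,
      real_inner_smul_right, real_inner_smul_right, hiΦ, hjΦ, hΦΦ]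
    show _ = (1 + t * f x + φ t) ^ 2 * (⟪pd i Φ x, pd j Φ x⟫ : ℝ) + _
    ring
  -- derivative of φ at 0
  have h0mem : (0 : ℝ) ∈ Ioo (-ε) ε := ⟨by linarith, hε⟩
  have hφd : HasDerivAt φ (deriv φ 0) 0 :=
    (((hφ.differentiableOn (by simp)) 0 h0mem).differentiableAt
      (isOpen_Ioo.mem_nhds h0mem)).hasDerivAt
  have h1 : HasDerivAt (fun t : ℝ => 1 + t * f x + φ t) (f x + deriv φ 0) 0 := by
    have := (((hasDerivAt_id (0 : ℝ)).mul_const (f x)).const_add 1).add hφd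
    exact this.congr_deriv (by simp)
  have hD : HasDerivAt
      (fun t : ℝ => (1 + t * f x + φ t) ^ 2 * gmet Φ x i j
        + t ^ 2 * (pd i f x * pd j f x))
      (2 * (f x + deriv φ 0) * gmet Φ x i j) 0 := by
    have h2 := (h1.pow 2).mul_const (gmet Φ x i j)
    have h3 := (hasDerivAt_pow 2 (0 : ℝ)).mul_const (pd i f x * pd j f x)
    have h4 := h2.add h3
    refine h4.congr_deriv ?_
    simp [hφ0]
  calc deriv (fun t => gmet (Xvar f φ Φ t) x i j) 0
      = deriv (fun t : ℝ => (1 + t * f x + φ t) ^ 2 * gmet Φ x i j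
          + t ^ 2 * (pd i f x * pd j f x)) 0 := by
        congr 1; funext t; exact hg t
    _ = 2 * (f x + deriv φ 0) * gmet Φ x i j := hD.deriv
end
end

section
/- For every x ∈ U, the first derivative of the unit normal at t = 0 is ∂N(t,x)/∂t |_{t=0} = −∇f(x), i.e. it equals −Σ_{i,j} g^{ij}(x) (∂f/∂x_i)(x) (∂Φ/∂x_j)(x). -/
open MeasureTheory Real Set
open scoped RealInnerProductSpace

noncomputable section

/-- Auxiliary: a vector orthogonal to a spanning family is zero. -/
lemma aux_eq_zero_of_inner {E : Type*} [NormedAddCommGroup E] [InnerProductSpace ℝ E]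
    {ι : Type*} (v : ι → E) (hsp : Submodule.span ℝ (Set.range v) = ⊤)
    (w : E) (hw : ∀ i, ⟪w, v i⟫ = 0) : w = 0 := by
  have hle : Submodule.span ℝ (Set.range v) ≤ (ℝ ∙ w)ᗮ := by
    rw [Submodule.span_le]
    rintro _ ⟨i, rfl⟩
    exact Submodule.mem_orthogonal_singleton_iff_inner_right.2 (hw i)
  have hmem : w ∈ (ℝ ∙ w)ᗮ := hle (by rw [hsp]; trivial)
  exact inner_self_eq_zero.1 (Submodule.mem_orthogonal_singleton_iff_inner_right.1 hmem)

/-- `∂N/∂t |_(t=0) = −∇f = −Σ g^ij ∂_i f ∂_j Φ`. -/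
theorem first_variation_normal {n : ℕ} (hn : 1 ≤ n) (U : Set (En n)) (hU : IsOpen U)
    (Φ : En n → En (n + 1)) (f : En n → ℝ) (φ : ℝ → ℝ) (ε : ℝ) (hε : 0 < ε)
    (hΦ : ContDiffOn ℝ (⊤ : ℕ∞) Φ U) (hf : ContDiffOn ℝ (⊤ : ℕ∞) f U)
    (hφ : ContDiffOn ℝ (⊤ : ℕ∞) φ (Ioo (-ε) ε)) (hφ0 : φ 0 = 0)
    (hsph : ∀ x ∈ U, ‖Φ x‖ = 1)
    (himm : ∀ x ∈ U, (gmet Φ x).PosDef)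
    (N : ℝ → En n → En (n + 1))
    (hNsm : ContDiffOn ℝ (⊤ : ℕ∞) (fun p : ℝ × En n => N p.1 p.2) (Ioo (-ε) ε ×ˢ U))
    (hNunit : ∀ t ∈ Ioo (-ε) ε, ∀ x ∈ U, ‖N t x‖ = 1)
    (hNorth : ∀ t ∈ Ioo (-ε) ε, ∀ x ∈ U, ∀ i : Fin n, ⟪N t x, pd i (Xvar f φ Φ t) x⟫ = 0)
    (hN0 : ∀ x ∈ U, N 0 x = Φ x) :
    ∀ x ∈ U,
      deriv (fun t => N t x) 0
        = -∑ i, ∑ j, ((gmet Φ x)⁻¹ i j * pd i f x) • pd j Φ x := by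
  intro x hx
  classical
  have hxU : U ∈ nhds x := hU.mem_nhds hx
  have h0ε : (0:ℝ) ∈ Ioo (-ε) ε := ⟨by linarith, hε⟩
  have hIoo : Ioo (-ε) ε ∈ nhds (0:ℝ) := isOpen_Ioo.mem_nhds h0ε
  have hΦd : DifferentiableAt ℝ Φ x :=
    ((hΦ.differentiableOn (by simp)) x hx).differentiableAt hxU
  have hfd : DifferentiableAt ℝ f x :=
    ((hf.differentiableOn (by simp)) x hx).differentiableAt hxU
  have hφd : DifferentiableAt ℝ φ 0 :=
    ((hφ.differentiableOn (by simp)) 0 h0ε).differentiableAt hIoo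
  have hNd : DifferentiableAt ℝ (fun p : ℝ × En n => N p.1 p.2) (0, x) :=
    ((hNsm.differentiableOn (by simp)) (0,x) ⟨h0ε, hx⟩).differentiableAt
      ((isOpen_Ioo.prod hU).mem_nhds ⟨h0ε, hx⟩)
  have hNx : DifferentiableAt ℝ (fun t => N t x) 0 := by
    have := hNd.comp (0:ℝ) ((differentiableAt_id (x := (0:ℝ))).prodMk (differentiableAt_const x) :
      DifferentiableAt ℝ (fun t : ℝ => ((t, x) : ℝ × En n)) (0:ℝ))
    exact this
  set V := deriv (fun t => N t x) 0 with hVdef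
  have hV : HasDerivAt (fun t => N t x) V 0 := hNx.hasDerivAt
  -- ⟪Φ x, Φ x⟫ = 1
  have hΦΦ : ⟪Φ x, Φ x⟫ = 1 := by
    rw [real_inner_self_eq_norm_mul_norm, hsph x hx]; ring
  -- orthogonality ⟪Φ x, pd i Φ x⟫ = 0
  have hD : ∀ i, ⟪Φ x, pd i Φ x⟫ = 0 := by
    intro i
    have hderiv : HasFDerivAt (fun y => ⟪Φ y, Φ y⟫)
        ((fderivInnerCLM ℝ (Φ x, Φ x)).comp ((fderiv ℝ Φ x).prod (fderiv ℝ Φ x))) x :=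
      hΦd.hasFDerivAt.inner ℝ hΦd.hasFDerivAt
    have heq : (fun y => ⟪Φ y, Φ y⟫) =ᶠ[nhds x] fun _ => (1:ℝ) := by
      filter_upwards [hxU] with y hy
      rw [real_inner_self_eq_norm_mul_norm, hsph y hy]; ring
    have hzero : HasFDerivAt (fun y => ⟪Φ y, Φ y⟫) (0 : En n →L[ℝ] ℝ) x :=
      (hasFDerivAt_const (1:ℝ) x).congr_of_eventuallyEq heq
    have huniq := hderiv.unique hzero
    have happ := congrArg (fun L : En n →L[ℝ] ℝ => L (EuclideanSpace.single i 1)) huniq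
    simp only [ContinuousLinearMap.comp_apply, ContinuousLinearMap.prod_apply,
      fderivInnerCLM_apply, ContinuousLinearMap.zero_apply] at happ
    have happ' : ⟪Φ x, pd i Φ x⟫ + ⟪pd i Φ x, Φ x⟫ = 0 := happ
    have hcomm := real_inner_comm (pd i Φ x) (Φ x)
    linarith
  have hD' : ∀ j, ⟪pd j Φ x, Φ x⟫ = 0 := fun j => by
    rw [real_inner_comm]; exact hD j
  -- first variation of unit length: ⟪V, Φ x⟫ = 0
  have hB : ⟪V, Φ x⟫ = 0 := by
    have h1 : HasDerivAt (fun t => ⟪N t x, N t x⟫) (⟪N 0 x, V⟫ + ⟪V, N 0 x⟫) 0 :=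
      hV.inner ℝ hV
    have heq : (fun t => ⟪N t x, N t x⟫) =ᶠ[nhds (0:ℝ)] fun _ => (1:ℝ) := by
      filter_upwards [hIoo] with t ht
      rw [real_inner_self_eq_norm_mul_norm, hNunit t ht x hx]; ring
    have h0 : HasDerivAt (fun t => ⟪N t x, N t x⟫) 0 0 :=
      (hasDerivAt_const (0:ℝ) (1:ℝ)).congr_of_eventuallyEq heq
    have huniq := h1.unique h0
    rw [hN0 x hx] at huniq
    have hcomm := real_inner_comm V (Φ x)
    linarith
  -- formula for pd i (Xvar f φ Φ t) x
  have hpdX : ∀ (t : ℝ) (i : Fin n),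
      pd i (Xvar f φ Φ t) x = (t * pd i f x) • Φ x + (1 + t * f x + φ t) • pd i Φ x := by
    intro t i
    have hc : HasFDerivAt (fun y => 1 + t * f y + φ t)
        (t • fderiv ℝ f x) x := by
      have h1 := (hfd.hasFDerivAt.const_mul t).const_add 1
      exact h1.add_const (φ t)
    have hS : HasFDerivAt (fun y => (1 + t * f y + φ t) • Φ y)
        ((1 + t * f x + φ t) • fderiv ℝ Φ x + (t • fderiv ℝ f x).smulRight (Φ x)) x :=
      hc.smul hΦd.hasFDerivAt
    have hfd' : fderiv ℝ (fun y => (1 + t * f y + φ t) • Φ y) x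
        = (1 + t * f x + φ t) • fderiv ℝ Φ x + (t • fderiv ℝ f x).smulRight (Φ x) :=
      hS.fderiv
    show fderiv ℝ (fun y => (1 + t * f y + φ t) • Φ y) x (EuclideanSpace.single i 1)
        = (t * pd i f x) • Φ x + (1 + t * f x + φ t) • pd i Φ x
    rw [hfd']
    simp only [ContinuousLinearMap.add_apply, ContinuousLinearMap.smul_apply,
      ContinuousLinearMap.smulRight_apply, pd, smul_eq_mul]
    exact add_comm _ _
  -- first variation of orthogonality: ⟪V, pd i Φ x⟫ = - pd i f x
  have hC : ∀ i, ⟪V, pd i Φ x⟫ = -(pd i f x) := by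
    intro i
    have hNΦ : HasDerivAt (fun t => ⟪N t x, Φ x⟫) ⟪V, Φ x⟫ 0 := by
      simpa using hV.inner ℝ (hasDerivAt_const (0:ℝ) (Φ x))
    have hNP : HasDerivAt (fun t => ⟪N t x, pd i Φ x⟫) ⟪V, pd i Φ x⟫ 0 := by
      simpa using hV.inner ℝ (hasDerivAt_const (0:ℝ) (pd i Φ x))
    have hta : HasDerivAt (fun t : ℝ => t * pd i f x) (pd i f x) 0 := by
      simpa using (hasDerivAt_id (0:ℝ)).mul_const (pd i f x)
    have hcc : HasDerivAt (fun t : ℝ => 1 + t * f x + φ t) (f x + deriv φ 0) 0 := by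
      have h1 : HasDerivAt (fun t : ℝ => 1 + t * f x) (f x) 0 := by
        simpa using ((hasDerivAt_id (0:ℝ)).mul_const (f x)).const_add 1
      exact h1.add hφd.hasDerivAt
    have hs : HasDerivAt
        (fun t => (t * pd i f x) * ⟪N t x, Φ x⟫ + (1 + t * f x + φ t) * ⟪N t x, pd i Φ x⟫)
        ((pd i f x * ⟪N 0 x, Φ x⟫ + (0 * pd i f x) * ⟪V, Φ x⟫)
          + ((f x + deriv φ 0) * ⟪N 0 x, pd i Φ x⟫ + (1 + 0 * f x + φ 0) * ⟪V, pd i Φ x⟫)) 0 :=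
      (hta.mul hNΦ).add (hcc.mul hNP)
    have heq : (fun t => (t * pd i f x) * ⟪N t x, Φ x⟫ + (1 + t * f x + φ t) * ⟪N t x, pd i Φ x⟫)
        =ᶠ[nhds (0:ℝ)] fun _ => (0:ℝ) := by
      filter_upwards [hIoo] with t ht
      have h := hNorth t ht x hx i
      rw [hpdX t i, inner_add_right, real_inner_smul_right, real_inner_smul_right] at h
      linarith
    have h0 : HasDerivAt
        (fun t => (t * pd i f x) * ⟪N t x, Φ x⟫ + (1 + t * f x + φ t) * ⟪N t x, pd i Φ x⟫) 0 0 :=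
      (hasDerivAt_const (0:ℝ) (0:ℝ)).congr_of_eventuallyEq heq
    have hkey := hs.unique h0
    rw [hN0 x hx, hΦΦ, hD i, hφ0] at hkey
    have hVΦ := hB
    nlinarith [hkey]
  -- inverse metric facts
  have hg1 : ((gmet Φ x)⁻¹ * gmet Φ x) = 1 :=
    Matrix.nonsing_inv_mul _ ((Matrix.isUnit_iff_isUnit_det _).1 (himm x hx).isUnit)
  have hPP : ∀ j k, ⟪pd j Φ x, pd k Φ x⟫ = gmet Φ x j k := fun j k => rfl
  set G := ∑ i, ∑ j, ((gmet Φ x)⁻¹ i j * pd i f x) • pd j Φ x with hGdef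
  have hGΦ : ⟪G, Φ x⟫ = 0 := by
    rw [hGdef]
    simp only [sum_inner, real_inner_smul_left, hD', mul_zero, Finset.sum_const_zero]
  have hGP : ∀ k, ⟪G, pd k Φ x⟫ = pd k f x := by
    intro k
    rw [hGdef]
    calc ⟪∑ i, ∑ j, ((gmet Φ x)⁻¹ i j * pd i f x) • pd j Φ x, pd k Φ x⟫
        = ∑ i, ∑ j, ((gmet Φ x)⁻¹ i j * pd i f x) * gmet Φ x j k := by
          simp only [sum_inner, real_inner_smul_left, hPP]
      _ = ∑ i, pd i f x * ((gmet Φ x)⁻¹ * gmet Φ x) i k := by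
          simp only [Matrix.mul_apply, Finset.mul_sum]
          exact Finset.sum_congr rfl fun i _ => Finset.sum_congr rfl fun j _ => by ring
      _ = pd k f x := by
          rw [hg1]
          simp [Matrix.one_apply]
  -- the spanning family
  set v : Fin (n+1) → En (n+1) := Fin.cons (Φ x) (fun i => pd i Φ x) with hvdef
  have hv0 : v 0 = Φ x := rfl
  have hvs : ∀ i : Fin n, v i.succ = pd i Φ x := fun i => rfl
  have hli : LinearIndependent ℝ v := by
    rw [Fintype.linearIndependent_iff]
    intro c hc
    rw [Fin.sum_univ_succ] at hc
    simp only [hv0, hvs] at hc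
    have hc0 : c 0 = 0 := by
      have h := congrArg (fun w => ⟪w, Φ x⟫) hc
      simp only [inner_add_left, sum_inner, real_inner_smul_left, hΦΦ, hD',
        mul_zero, mul_one, Finset.sum_const_zero, add_zero, inner_zero_left] at h
      exact h
    have hsum' : ∑ i : Fin n, c i.succ • pd i Φ x = 0 := by
      rwa [hc0, zero_smul, zero_add] at hc
    have hmv : (gmet Φ x).mulVec (fun i => c i.succ) = 0 := by
      funext k
      have h := congrArg (fun w => ⟪pd k Φ x, w⟫) hsum'
      simp only [inner_sum, real_inner_smul_right, inner_zero_right] at h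
      simp only [Matrix.mulVec, dotProduct, Pi.zero_apply]
      rw [← h]
      exact Finset.sum_congr rfl fun i _ => by rw [hPP]; ring
    have hcz : ∀ i : Fin n, c i.succ = 0 := by
      have h3 : (gmet Φ x)⁻¹.mulVec ((gmet Φ x).mulVec fun i => c i.succ)
          = (gmet Φ x)⁻¹.mulVec 0 := by rw [hmv]
      rw [Matrix.mulVec_mulVec, hg1, Matrix.one_mulVec, Matrix.mulVec_zero] at h3
      intro i; exact congrFun h3 i
    intro i
    exact Fin.cases hc0 hcz i
  have hcard : Fintype.card (Fin (n+1)) = Module.finrank ℝ (En (n+1)) := by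
    simp [finrank_euclideanSpace_fin]
  have hsp : Submodule.span ℝ (Set.range v) = ⊤ :=
    hli.span_eq_top_of_card_eq_finrank hcard
  -- conclusion
  have hW : V + G = 0 := by
    apply aux_eq_zero_of_inner v hsp
    intro i
    refine Fin.cases ?_ ?_ i
    · rw [hv0, inner_add_left, hB, hGΦ]; ring
    · intro k
      rw [hvs, inner_add_left, hC k, hGP k]; ring
  exact eq_neg_of_add_eq_zero_left hW
end
end

section
/- For every x ∈ U and all indices i, j, the first derivative of the second fundamental form at t = 0 is ∂h_{ij}(t)/∂t |_{t=0} = (f(x) + φ'(0)) g_{ij}(x) − (∇²f)_{ij}(x). -/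
open MeasureTheory Real Set
open scoped RealInnerProductSpace

noncomputable section

section helpers
variable {m : ℕ} {E : Type} [NormedAddCommGroup E] [NormedSpace ℝ E]

lemma pd_congr {F G : En m → E} {x : En m} (h : F =ᶠ[nhds x] G) (i : Fin m) :
    pd i F x = pd i G x := by rw [pd, pd, h.fderiv_eq]

lemma pd_const {x : En m} (c : E) (i : Fin m) : pd i (fun _ => c) x = 0 := by
  simp [pd]

lemma pd_pd {F : En m → E} {x : En m} (hF : DifferentiableAt ℝ (fderiv ℝ F) x) (i j : Fin m) :
    pd i (fun y => pd j F y) x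
      = fderiv ℝ (fderiv ℝ F) x (EuclideanSpace.single i 1) (EuclideanSpace.single j 1) := by
  have h : HasFDerivAt (fun y => pd j F y)
      ((ContinuousLinearMap.apply ℝ E (EuclideanSpace.single j 1)).comp
        (fderiv ℝ (fderiv ℝ F) x)) x :=
    by simpa [Function.comp_def, pd] using
      (ContinuousLinearMap.apply ℝ E (EuclideanSpace.single j 1)).hasFDerivAt.comp x
        hF.hasFDerivAt
  rw [pd, h.fderiv]; rfl

lemma fderiv_differentiableAt {E' F' : Type} [NormedAddCommGroup E'] [NormedSpace ℝ E']
    [NormedAddCommGroup F'] [NormedSpace ℝ F'] {F : E' → F'} {x : E'}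
    (hF : ContDiffAt ℝ (⊤ : ℕ∞) F x) :
    DifferentiableAt ℝ (fderiv ℝ F) x := by
  have : ContDiffAt ℝ 1 (fderiv ℝ F) x := hF.fderiv_right (by exact (WithTop.coe_le_coe.mpr le_top : ((2:ℕ∞) : WithTop ℕ∞) ≤ ((⊤:ℕ∞) : WithTop ℕ∞)))
  exact this.differentiableAt one_ne_zero

lemma pd_symm {F : En m → E} {x : En m} (hF : ContDiffAt ℝ (⊤ : ℕ∞) F x) (i j : Fin m) :
    pd i (fun y => pd j F y) x = pd j (fun y => pd i F y) x := by
  have h2 := fderiv_differentiableAt hF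
  rw [pd_pd h2, pd_pd h2, (hF.isSymmSndFDerivAt (by simp only [minSmoothness_of_isRCLikeNormedField]; exact (WithTop.coe_le_coe.mpr le_top : ((2:ℕ∞) : WithTop ℕ∞) ≤ ((⊤:ℕ∞) : WithTop ℕ∞)))).eq]

end helpers

section ihelpers
variable {m : ℕ} {E : Type} [NormedAddCommGroup E] [InnerProductSpace ℝ E]

lemma pd_inner {F G : En m → E} {x : En m}
    (hF : DifferentiableAt ℝ F x) (hG : DifferentiableAt ℝ G x) (i : Fin m) :
    pd i (fun y => ⟪F y, G y⟫) x = ⟪pd i F x, G x⟫ + ⟪F x, pd i G x⟫ := by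
  rw [pd, fderiv_inner_apply ℝ hF hG, pd, pd, add_comm]

lemma pd_differentiableAt {F : En m → E} {U : Set (En m)} (hU : IsOpen U)
    (hF : ContDiffOn ℝ (⊤ : ℕ∞) F U) {x : En m} (hx : x ∈ U) (i : Fin m) :
    DifferentiableAt ℝ (fun y => pd i F y) x := by
  have hD : DifferentiableAt ℝ (fderiv ℝ F) x := by
    have : ContDiffAt ℝ 1 (fderiv ℝ F) x :=
      (hF.contDiffAt (hU.mem_nhds hx)).fderiv_right (by exact (WithTop.coe_le_coe.mpr le_top : ((2:ℕ∞) : WithTop ℕ∞) ≤ ((⊤:ℕ∞) : WithTop ℕ∞)))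
    exact this.differentiableAt one_ne_zero
  exact (by simpa [Function.comp_def, pd] using
    ((ContinuousLinearMap.apply ℝ E (EuclideanSpace.single i 1)).hasFDerivAt.comp x
      hD.hasFDerivAt).differentiableAt : DifferentiableAt ℝ (fun y => pd i F y) x)

/-- Key linear algebra fact: a vector orthogonal to `Φx` and to all `V k` is zero,
when `Φx` is a unit vector orthogonal to the `V k` and the Gram matrix of the `V k`
is positive definite. -/
lemma eq_zero_of_orth {n : ℕ} (Φx : En (n + 1)) (V : Fin n → En (n + 1))
    (h1 : ⟪Φx, Φx⟫ = 1) (horth : ∀ k, ⟪Φx, V k⟫ = 0)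
    (hpos : (Matrix.of fun k l => (⟪V k, V l⟫ : ℝ)).PosDef)
    (u : En (n + 1)) (hu0 : ⟪u, Φx⟫ = 0) (huk : ∀ k, ⟪u, V k⟫ = 0) : u = 0 := by
  set b : Fin (n + 1) → En (n + 1) := Fin.cons Φx V with hb
  have hli : LinearIndependent ℝ b := by
    rw [Fintype.linearIndependent_iff]
    intro a ha
    have hsum : a 0 • Φx + ∑ k : Fin n, a k.succ • V k = 0 := by
      simpa [hb, Fin.sum_univ_succ] using ha
    have ha0 : a 0 = 0 := by
      have := congrArg (fun w => (⟪Φx, w⟫ : ℝ)) hsum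
      have hne : Φx ≠ 0 := by rintro rfl; simp at h1
      simpa [inner_add_right, inner_smul_right, inner_sum, horth, h1, hne] using this
    have hsum2 : ∑ k : Fin n, a k.succ • V k = 0 := by
      rw [ha0] at hsum; simpa using hsum
    have hzero : ∀ mm : Fin n, ∑ k : Fin n, a k.succ * ⟪V k, V mm⟫ = 0 := by
      intro mm
      have := congrArg (fun w => (⟪w, V mm⟫ : ℝ)) hsum2
      simpa [sum_inner, inner_smul_left] using this
    have hvec : (fun k : Fin n => a k.succ) = 0 := by
      by_contra hne
      have hlt := hpos.dotProduct_mulVec_pos (x := fun k => a k.succ) hne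
      have hzz : dotProduct (star (fun k : Fin n => a k.succ))
          ((Matrix.of fun k l => (⟪V k, V l⟫ : ℝ)).mulVec fun k => a k.succ) = 0 := by
        simp only [dotProduct, Matrix.mulVec, Pi.star_apply,
          star_trivial, Matrix.of_apply, Finset.mul_sum]
        rw [Finset.sum_comm]
        refine Finset.sum_eq_zero fun l _ => ?_
        have h1' : ∑ k, a k.succ * ((⟪V k, V l⟫ : ℝ) * a l.succ)
            = (∑ k, a k.succ * (⟪V k, V l⟫ : ℝ)) * a l.succ := by
          rw [Finset.sum_mul]; exact Finset.sum_congr rfl fun k _ => by ring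
        rw [h1', hzero l, zero_mul]
      exact lt_irrefl 0 (hzz ▸ hlt)
    intro i
    refine Fin.cases ?_ ?_ i
    · exact ha0
    · exact fun k => congrFun hvec k
  have hcard : Fintype.card (Fin (n + 1)) = Module.finrank ℝ (En (n + 1)) := by
    simp [finrank_euclideanSpace_fin]
  have hspan := hli.span_eq_top_of_card_eq_finrank hcard
  have hK : Submodule.span ℝ (Set.range b) ≤
      LinearMap.ker (innerSL ℝ u : En (n + 1) →L[ℝ] ℝ).toLinearMap := by
    rw [Submodule.span_le]
    rintro w ⟨ii, rfl⟩
    simp only [SetLike.mem_coe, LinearMap.mem_ker, ContinuousLinearMap.coe_coe, innerSL_apply_apply]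
    refine Fin.cases ?_ ?_ ii
    · simpa [hb] using hu0
    · exact fun k => by simpa [hb] using huk k
  have hu : ⟪u, u⟫ = (0 : ℝ) := by
    have : u ∈ LinearMap.ker (innerSL ℝ u : En (n + 1) →L[ℝ] ℝ).toLinearMap :=
      hK (hspan ▸ Submodule.mem_top)
    simpa using this
  exact inner_self_eq_zero.mp hu

end ihelpers

/-- `∂h_ij/∂t |_(t=0) = (f + φ'(0)) g_ij − (∇²f)_ij`. -/
theorem first_variation_second_fundamental_form {n : ℕ} (hn : 1 ≤ n) (U : Set (En n)) (hU : IsOpen U)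
    (Φ : En n → En (n + 1)) (f : En n → ℝ) (φ : ℝ → ℝ) (ε : ℝ) (hε : 0 < ε)
    (hΦ : ContDiffOn ℝ (⊤ : ℕ∞) Φ U) (hf : ContDiffOn ℝ (⊤ : ℕ∞) f U)
    (hφ : ContDiffOn ℝ (⊤ : ℕ∞) φ (Ioo (-ε) ε)) (hφ0 : φ 0 = 0)
    (hsph : ∀ x ∈ U, ‖Φ x‖ = 1)
    (himm : ∀ x ∈ U, (gmet Φ x).PosDef)
    (N : ℝ → En n → En (n + 1))
    (hNsm : ContDiffOn ℝ (⊤ : ℕ∞) (fun p : ℝ × En n => N p.1 p.2) (Ioo (-ε) ε ×ˢ U))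
    (hNunit : ∀ t ∈ Ioo (-ε) ε, ∀ x ∈ U, ‖N t x‖ = 1)
    (hNorth : ∀ t ∈ Ioo (-ε) ε, ∀ x ∈ U, ∀ i : Fin n, ⟪N t x, pd i (Xvar f φ Φ t) x⟫ = 0)
    (hN0 : ∀ x ∈ U, N 0 x = Φ x) :
    ∀ x ∈ U, ∀ i j : Fin n,
      deriv (fun t => sff (Xvar f φ Φ t) (N t) x i j) 0
        = (f x + deriv φ 0) * gmet Φ x i j - hess Φ f x i j := by
  intro x hx i j
  classical
  have h0ε : (0 : ℝ) ∈ Ioo (-ε) ε := ⟨by linarith, hε⟩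
  have hS : IsOpen (Ioo (-ε) ε ×ˢ U) := isOpen_Ioo.prod hU
  have h0x : ((0 : ℝ), x) ∈ Ioo (-ε) ε ×ˢ U := ⟨h0ε, hx⟩
  set G : ℝ × En n → En (n + 1) := fun p => N p.1 p.2 with hGdef
  have hGat : ∀ p ∈ Ioo (-ε) ε ×ˢ U, ContDiffAt ℝ (⊤ : ℕ∞) G p :=
    fun p hp => hNsm.contDiffAt (hS.mem_nhds hp)
  have hfat : ∀ y ∈ U, ContDiffAt ℝ (⊤ : ℕ∞) f y := fun y hy => hf.contDiffAt (hU.mem_nhds hy)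
  have hΦat : ∀ y ∈ U, ContDiffAt ℝ (⊤ : ℕ∞) Φ y := fun y hy => hΦ.contDiffAt (hU.mem_nhds hy)
  have hfd : ∀ y ∈ U, DifferentiableAt ℝ f y :=
    fun y hy => (hfat y hy).differentiableAt (by simp)
  have hΦd : ∀ y ∈ U, DifferentiableAt ℝ Φ y :=
    fun y hy => (hΦat y hy).differentiableAt (by simp)
  have hφd : DifferentiableAt ℝ φ 0 :=
    (hφ.contDiffAt (isOpen_Ioo.mem_nhds h0ε)).differentiableAt (by simp)
  -- sphere identities
  have hsph' : ∀ y ∈ U, (⟪Φ y, Φ y⟫ : ℝ) = 1 := by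
    intro y hy
    rw [real_inner_self_eq_norm_sq, hsph y hy]; norm_num
  have hΦtan : ∀ y ∈ U, ∀ k : Fin n, (⟪pd k Φ y, Φ y⟫ : ℝ) = 0 := by
    intro y hy k
    have hconst : (fun z => (⟪Φ z, Φ z⟫ : ℝ)) =ᶠ[nhds y] fun _ => 1 := by
      filter_upwards [hU.mem_nhds hy] with z hz using hsph' z hz
    have h0 : pd k (fun z => (⟪Φ z, Φ z⟫ : ℝ)) y = 0 := by
      rw [pd_congr hconst, pd_const]
    rw [pd_inner (hΦd y hy) (hΦd y hy)] at h0
    have hcomm := real_inner_comm (Φ y) (pd k Φ y)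
    linarith
  -- derivative of the space-variable of the variation
  have hA : ∀ (k : Fin n), ∀ y ∈ U, ∀ t : ℝ, pd k (Xvar f φ Φ t) y
      = (t * pd k f y) • Φ y + (1 + t * f y + φ t) • pd k Φ y := by
    intro k y hy t
    have hc : HasFDerivAt (fun z => 1 + t * f z + φ t) (t • fderiv ℝ f y) y := by
      simpa using (((hfd y hy).hasFDerivAt.const_mul t).const_add 1).add_const (φ t)
    have hXf := hc.fun_smul (hΦd y hy).hasFDerivAt
    have hXeq : Xvar f φ Φ t = fun z => (1 + t * f z + φ t) • Φ z := rfl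
    rw [hXeq, pd, hXf.fderiv]
    simp only [ContinuousLinearMap.add_apply, ContinuousLinearMap.smul_apply,
      ContinuousLinearMap.smulRight_apply, ContinuousLinearMap.coe_smul', Pi.smul_apply, pd,
      smul_eq_mul]
    exact add_comm _ _
  -- the t-derivative of the variation vector field
  set W : En n → En (n + 1) := fun y => fderiv ℝ G (0, y) (1, 0) with hWdef
  have hWt : ∀ y ∈ U, HasDerivAt (fun t => N t y) (W y) 0 := by
    intro y hy
    have hmk : HasDerivAt (fun t : ℝ => (t, y)) ((1 : ℝ), (0 : En n)) 0 :=
      (hasDerivAt_id 0).prodMk (hasDerivAt_const 0 y)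
    have := (((hGat (0, y) ⟨h0ε, hy⟩).differentiableAt (by simp)).hasFDerivAt).comp_hasDerivAt
      0 hmk
    simpa [hGdef, Function.comp_def] using this
  -- derivative in t of `A` (explicit formula)
  have hAder : ∀ (k : Fin n), ∀ y : En n,
      HasDerivAt (fun t : ℝ => (t * pd k f y) • Φ y + (1 + t * f y + φ t) • pd k Φ y)
        (pd k f y • Φ y + (f y + deriv φ 0) • pd k Φ y) 0 := by
    intro k y
    have h1 : HasDerivAt (fun t : ℝ => (t * pd k f y) • Φ y) (pd k f y • Φ y) 0 := by
      simpa using ((hasDerivAt_id (0 : ℝ)).mul_const (pd k f y)).smul_const (Φ y)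
    have h2 : HasDerivAt (fun t : ℝ => (1 + t * f y + φ t) • pd k Φ y)
        ((f y + deriv φ 0) • pd k Φ y) 0 := by
      have hφ' : HasDerivAt φ (deriv φ 0) 0 := hφd.hasDerivAt
      have h3 : HasDerivAt (fun t : ℝ => 1 + t * f y + φ t) (f y + deriv φ 0) 0 := by
        simpa using (((hasDerivAt_id (0 : ℝ)).mul_const (f y)).const_add 1).fun_add hφ'
      exact h3.smul_const (pd k Φ y)
    exact h1.add h2
  -- tangential derivative constraint: ⟪W y, ∂_k Φ y⟫ = -∂_k f y
  have hWtan : ∀ (k : Fin n), ∀ y ∈ U, (⟪W y, pd k Φ y⟫ : ℝ) = -pd k f y := by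
    intro k y hy
    have hin := (hWt y hy).inner ℝ (hAder k y)
    have hzero : (fun t => (⟪N t y,
        (t * pd k f y) • Φ y + (1 + t * f y + φ t) • pd k Φ y⟫ : ℝ)) =ᶠ[nhds 0]
        fun _ => 0 := by
      filter_upwards [isOpen_Ioo.mem_nhds h0ε] with t ht
      rw [← hA k y hy t]; exact hNorth t ht y hy k
    have huniq := hin.unique ((hasDerivAt_const (0 : ℝ) (0 : ℝ)).congr_of_eventuallyEq hzero)
    rw [hN0 y hy] at huniq
    have e1 := hsph' y hy
    have e3 : (⟪Φ y, pd k Φ y⟫ : ℝ) = 0 := by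
      rw [real_inner_comm]; exact hΦtan y hy k
    simp only [hφ0, zero_mul, zero_smul, zero_add, mul_zero, add_zero, one_smul,
      inner_add_right, real_inner_smul_right, e1, e3] at huniq
    linarith [huniq]
  -- normal constraint: ⟪W x, Φ x⟫ = 0
  have hWperp : (⟪W x, Φ x⟫ : ℝ) = 0 := by
    have hin := (hWt x hx).inner ℝ (hWt x hx)
    have hzero : (fun t => (⟪N t x, N t x⟫ : ℝ)) =ᶠ[nhds 0] fun _ => 1 := by
      filter_upwards [isOpen_Ioo.mem_nhds h0ε] with t ht
      rw [real_inner_self_eq_norm_sq, hNunit t ht x hx]; norm_num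
    have huniq := hin.unique ((hasDerivAt_const (0 : ℝ) (1 : ℝ)).congr_of_eventuallyEq hzero)
    rw [hN0 x hx] at huniq
    linarith [huniq, real_inner_comm (Φ x) (W x)]
  -- second fderiv of G and the mixed partial identity
  have hDG : DifferentiableAt ℝ (fderiv ℝ G) (0, x) := fderiv_differentiableAt (hGat _ h0x)
  have hBev : ∀ t ∈ Ioo (-ε) ε, pd j (N t) x
      = fderiv ℝ G (t, x) ((0 : ℝ), EuclideanSpace.single j 1) := by
    intro t ht
    have hGd : DifferentiableAt ℝ G (t, x) := (hGat _ ⟨ht, hx⟩).differentiableAt (by simp)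
    have hcomp : HasFDerivAt (N t)
        ((fderiv ℝ G (t, x)).comp (ContinuousLinearMap.inr ℝ ℝ (En n))) x := by
      simpa [hGdef, Function.comp_def] using
        hGd.hasFDerivAt.comp x (hasFDerivAt_prodMk_right t x)
    rw [pd, hcomp.fderiv]
    rfl
  have hBder : HasDerivAt
      (fun t => fderiv ℝ G (t, x) ((0 : ℝ), EuclideanSpace.single j 1))
      (fderiv ℝ (fderiv ℝ G) (0, x) ((1 : ℝ), (0 : En n))
        ((0 : ℝ), EuclideanSpace.single j 1)) 0 := by
    have hmk : HasDerivAt (fun t : ℝ => (t, x)) ((1 : ℝ), (0 : En n)) 0 :=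
      (hasDerivAt_id 0).prodMk (hasDerivAt_const 0 x)
    have h1 : HasDerivAt (fun t : ℝ => fderiv ℝ G (t, x))
        (fderiv ℝ (fderiv ℝ G) (0, x) ((1 : ℝ), (0 : En n))) 0 := by
      simpa [Function.comp_def] using hDG.hasFDerivAt.comp_hasDerivAt 0 hmk
    simpa [Function.comp_def] using
      (ContinuousLinearMap.apply ℝ (En (n + 1))
        ((0 : ℝ), EuclideanSpace.single j 1)).hasFDerivAt.comp_hasDerivAt 0 h1
  -- W is differentiable at x and its j-th partial is the mixed second derivative
  have hWdiff : DifferentiableAt ℝ W x := by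
    have h1 : DifferentiableAt ℝ (fun y => fderiv ℝ G (0, y)) x :=
      hDG.comp x (hasFDerivAt_prodMk_right (0 : ℝ) x).differentiableAt
    exact ((ContinuousLinearMap.apply ℝ (En (n + 1))
      ((1 : ℝ), (0 : En n))).differentiableAt).comp x h1
  have hpdW : pd j W x = fderiv ℝ (fderiv ℝ G) (0, x)
      ((0 : ℝ), EuclideanSpace.single j 1) ((1 : ℝ), (0 : En n)) := by
    have h1 : HasFDerivAt (fun y => fderiv ℝ G (0, y))
        ((fderiv ℝ (fderiv ℝ G) (0, x)).comp (ContinuousLinearMap.inr ℝ ℝ (En n))) x := by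
      simpa [Function.comp_def] using
        hDG.hasFDerivAt.comp x (hasFDerivAt_prodMk_right (0 : ℝ) x)
    have hcompW : HasFDerivAt W
        ((ContinuousLinearMap.apply ℝ (En (n + 1)) ((1 : ℝ), (0 : En n))).comp
          ((fderiv ℝ (fderiv ℝ G) (0, x)).comp (ContinuousLinearMap.inr ℝ ℝ (En n)))) x := by
      simpa [hWdef, Function.comp_def] using
        (ContinuousLinearMap.apply ℝ (En (n + 1))
          ((1 : ℝ), (0 : En n))).hasFDerivAt.comp x h1
    rw [pd, hcompW.fderiv]
    rfl
  have hsymm := (hGat _ h0x).isSymmSndFDerivAt (by simp only [minSmoothness_of_isRCLikeNormedField]; exact (WithTop.coe_le_coe.mpr le_top : ((2:ℕ∞) : WithTop ℕ∞) ≤ ((⊤:ℕ∞) : WithTop ℕ∞)))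
  have hmix : fderiv ℝ (fderiv ℝ G) (0, x) ((1 : ℝ), (0 : En n))
      ((0 : ℝ), EuclideanSpace.single j 1) = pd j W x := by
    rw [hpdW, hsymm.eq]
  -- main derivative computation
  have hmain : (fun t => sff (Xvar f φ Φ t) (N t) x i j) =ᶠ[nhds 0]
      (fun t => (⟪(t * pd i f x) • Φ x + (1 + t * f x + φ t) • pd i Φ x,
        fderiv ℝ G (t, x) ((0 : ℝ), EuclideanSpace.single j 1)⟫ : ℝ)) := by
    filter_upwards [isOpen_Ioo.mem_nhds h0ε] with t ht
    show sff (Xvar f φ Φ t) (N t) x i j = _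
    rw [sff, Matrix.of_apply, hA i x hx t, hBev t ht]
  have hdtotal := (hAder i x).inner ℝ hBder
  have hderiv_eq : deriv (fun t => sff (Xvar f φ Φ t) (N t) x i j) 0
      = (⟪(0 * pd i f x) • Φ x + (1 + 0 * f x + φ 0) • pd i Φ x,
          fderiv ℝ (fderiv ℝ G) (0, x) ((1 : ℝ), (0 : En n))
            ((0 : ℝ), EuclideanSpace.single j 1)⟫ : ℝ)
        + ⟪pd i f x • Φ x + (f x + deriv φ 0) • pd i Φ x,
            fderiv ℝ G (0, x) ((0 : ℝ), EuclideanSpace.single j 1)⟫ := by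
    rw [hmain.deriv_eq, hdtotal.deriv]
  -- identify the two inner products
  have hB0 : fderiv ℝ G (0, x) ((0 : ℝ), EuclideanSpace.single j 1) = pd j Φ x := by
    rw [← hBev 0 h0ε]
    refine pd_congr ?_ j
    filter_upwards [hU.mem_nhds hx] with z hz using hN0 z hz
  -- product rule for ⟪∂_i Φ, W⟫
  have hprod := pd_inner (pd_differentiableAt hU hΦ hx i) hWdiff j
  have hWtanU : (fun y => (⟪pd i Φ y, W y⟫ : ℝ)) =ᶠ[nhds x] fun y => -pd i f y := by
    filter_upwards [hU.mem_nhds hx] with z hz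
    rw [real_inner_comm]; exact hWtan i z hz
  have hlhs : pd j (fun y => (⟪pd i Φ y, W y⟫ : ℝ)) x = -pd j (fun y => pd i f y) x := by
    rw [pd_congr hWtanU j, pd]
    rw [show (fun y => -pd i f y) = fun y => -(fun z => pd i f z) y from rfl, fderiv_fun_neg]
    simp [pd]
  -- Christoffel identity
  have hgmet_pd : ∀ a b c : Fin n, pd a (fun y => gmet Φ y b c) x
      = ⟪pd a (fun y => pd b Φ y) x, pd c Φ x⟫
        + ⟪pd b Φ x, pd a (fun y => pd c Φ y) x⟫ := by
    intro a b c
    have heq : (fun y => gmet Φ y b c) = fun y => (⟪pd b Φ y, pd c Φ y⟫ : ℝ) := rfl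
    rw [heq, pd_inner (pd_differentiableAt hU hΦ hx b) (pd_differentiableAt hU hΦ hx c)]
  have hGam : ∀ k : Fin n, christoffel Φ k i j x
      = ∑ l, (gmet Φ x)⁻¹ k l * ⟪pd j (fun y => pd i Φ y) x, pd l Φ x⟫ := by
    intro k
    rw [christoffel, Finset.mul_sum]
    refine Finset.sum_congr rfl fun l _ => ?_
    rw [hgmet_pd i l j, hgmet_pd j l i, hgmet_pd l i j]
    rw [pd_symm (hΦat x hx) i l, pd_symm (hΦat x hx) j l,
      pd_symm (hΦat x hx) i j]
    rw [real_inner_comm (pd l Φ x) (pd j (fun y => pd i Φ y) x)]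
    rw [real_inner_comm (pd i Φ x) (pd l (fun y => pd j Φ y) x)]
    ring
  -- W x equals the negative tangential gradient
  have hgd := himm x hx
  have hdet : IsUnit (gmet Φ x).det := hgd.det_pos.ne'.isUnit
  have hmul : (gmet Φ x)⁻¹ * gmet Φ x = 1 := Matrix.nonsing_inv_mul _ hdet
  set V : En (n + 1) := ∑ k, ∑ l, (-((gmet Φ x)⁻¹ k l * pd k f x)) • pd l Φ x with hV
  have hinnerVk : ∀ k' : Fin n, (⟪V, pd k' Φ x⟫ : ℝ) = -pd k' f x := by
    intro k'
    rw [hV, sum_inner]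
    have hterm : ∀ k : Fin n, (⟪∑ l, (-((gmet Φ x)⁻¹ k l * pd k f x)) • pd l Φ x,
        pd k' Φ x⟫ : ℝ) = -(pd k f x * ∑ l, (gmet Φ x)⁻¹ k l * gmet Φ x l k') := by
      intro k
      rw [sum_inner, Finset.mul_sum, ← Finset.sum_neg_distrib]
      refine Finset.sum_congr rfl fun l _ => ?_
      rw [real_inner_smul_left]
      show -((gmet Φ x)⁻¹ k l * pd k f x) * (⟪pd l Φ x, pd k' Φ x⟫ : ℝ) = _
      have : gmet Φ x l k' = (⟪pd l Φ x, pd k' Φ x⟫ : ℝ) := rfl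
      rw [this]; ring
    rw [Finset.sum_congr rfl fun k _ => hterm k]
    have hone : ∀ k : Fin n, ∑ l, (gmet Φ x)⁻¹ k l * gmet Φ x l k'
        = (1 : Matrix (Fin n) (Fin n) ℝ) k k' := by
      intro k; rw [← Matrix.mul_apply, hmul]
    rw [Finset.sum_congr rfl fun k _ => by rw [hone k]]
    simp [Matrix.one_apply]
  have hinnerV0 : (⟪V, Φ x⟫ : ℝ) = 0 := by
    rw [hV, sum_inner]
    refine Finset.sum_eq_zero fun k _ => ?_
    rw [sum_inner]
    refine Finset.sum_eq_zero fun l _ => ?_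
    rw [real_inner_smul_left, hΦtan x hx l, mul_zero]
  have hWV : W x = V := by
    have hposdef : (Matrix.of fun k l => (⟪pd k Φ x, pd l Φ x⟫ : ℝ)).PosDef := himm x hx
    have := eq_zero_of_orth (Φ x) (fun k => pd k Φ x) (hsph' x hx)
      (fun k => by rw [real_inner_comm]; exact hΦtan x hx k) hposdef (W x - V)
      (by rw [inner_sub_left, hWperp, hinnerV0, sub_zero])
      (fun k => by rw [inner_sub_left, hWtan k x hx, hinnerVk k, sub_self])
    exact sub_eq_zero.mp this
  -- ⟪∂_j ∂_i Φ, W⟫ = -∑ Γ^k_{ij} ∂_k f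
  have hPW : (⟪pd j (fun y => pd i Φ y) x, W x⟫ : ℝ)
      = -∑ k, christoffel Φ k i j x * pd k f x := by
    rw [hWV, hV, inner_sum]
    have hterm2 : ∀ k : Fin n, (⟪pd j (fun y => pd i Φ y) x,
        ∑ l, (-((gmet Φ x)⁻¹ k l * pd k f x)) • pd l Φ x⟫ : ℝ)
        = -(christoffel Φ k i j x * pd k f x) := by
      intro k
      rw [inner_sum, hGam k, Finset.sum_mul, ← Finset.sum_neg_distrib]
      refine Finset.sum_congr rfl fun l _ => ?_
      rw [real_inner_smul_right]; ring
    rw [Finset.sum_congr rfl fun k _ => hterm2 k, Finset.sum_neg_distrib]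
  -- final assembly
  rw [hderiv_eq, hmix, hB0]
  rw [hφ0]
  simp only [zero_mul, zero_smul, zero_add, add_zero, one_smul, inner_add_left,
    real_inner_smul_left]
  have hPjx : (⟪Φ x, pd j Φ x⟫ : ℝ) = 0 := by rw [real_inner_comm]; exact hΦtan x hx j
  have hiW : (⟪pd i Φ x, pd j W x⟫ : ℝ)
      = -pd j (fun y => pd i f y) x - (⟪pd j (fun y => pd i Φ y) x, W x⟫ : ℝ) := by
    rw [hprod] at hlhs; linarith [hlhs]
  have hfsym : pd j (fun y => pd i f y) x = pd i (fun y => pd j f y) x :=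
    pd_symm (hfat x hx) j i
  have hgm : gmet Φ x i j = (⟪pd i Φ x, pd j Φ x⟫ : ℝ) := rfl
  rw [hiW, hPW, hPjx, hgm]
  simp only [hess]
  rw [hfsym]
  ring
end
end

section
/- For every x ∈ U and all indices i, j, the second derivative of the induced metric at t = 0 is ∂²g_{ij}(t)/∂t² |_{t=0} = 2 (∂f/∂x_i)(x)(∂f/∂x_j)(x) + 2 (f(x) + φ'(0))² g_{ij}(x) + 2 φ''(0) g_{ij}(x). -/
open MeasureTheory Real Set
open scoped RealInnerProductSpace

noncomputable section

/-- `∂²g_ij/∂t² |_(t=0) = 2 ∂_i f ∂_j f + 2 (f + φ'(0))² g_ij + 2 φ''(0) g_ij`. -/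
theorem second_variation_metric {n : ℕ} (hn : 1 ≤ n) (U : Set (En n)) (hU : IsOpen U)
    (Φ : En n → En (n + 1)) (f : En n → ℝ) (φ : ℝ → ℝ) (ε : ℝ) (hε : 0 < ε)
    (hΦ : ContDiffOn ℝ (⊤ : ℕ∞) Φ U) (hf : ContDiffOn ℝ (⊤ : ℕ∞) f U)
    (hφ : ContDiffOn ℝ (⊤ : ℕ∞) φ (Ioo (-ε) ε)) (hφ0 : φ 0 = 0)
    (hsph : ∀ x ∈ U, ‖Φ x‖ = 1)
    (himm : ∀ x ∈ U, (gmet Φ x).PosDef) :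
    ∀ x ∈ U, ∀ i j : Fin n,
      deriv (deriv (fun t => gmet (Xvar f φ Φ t) x i j)) 0
        = 2 * pd i f x * pd j f x + 2 * (f x + deriv φ 0) ^ 2 * gmet Φ x i j
          + 2 * deriv (deriv φ) 0 * gmet Φ x i j := by
  intro x hx i j
  have hxn : U ∈ nhds x := hU.mem_nhds hx
  have hfd : DifferentiableAt ℝ f x := (hf.contDiffAt hxn).differentiableAt (by simp)
  have hΦd : DifferentiableAt ℝ Φ x := (hΦ.contDiffAt hxn).differentiableAt (by simp)
  have h0mem : (0:ℝ) ∈ Ioo (-ε) ε := by constructor <;> linarith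
  have h0n : Ioo (-ε) ε ∈ nhds (0:ℝ) := isOpen_Ioo.mem_nhds h0mem
  -- orthogonality of Φ and its partial derivatives
  have horth : ∀ k : Fin n, ⟪Φ x, pd k Φ x⟫ = 0 := by
    intro k
    have hconst : (fun y => ⟪Φ y, Φ y⟫) =ᶠ[nhds x] fun _ => (1:ℝ) := by
      filter_upwards [hxn] with y hy
      rw [real_inner_self_eq_norm_sq, hsph y hy]; norm_num
    have h0 : fderiv ℝ (fun y => ⟪Φ y, Φ y⟫) x = 0 := by
      rw [hconst.fderiv_eq]; exact fderiv_const_apply 1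
    have h1 := fderiv_inner_apply (𝕜 := ℝ) hΦd hΦd (EuclideanSpace.single k 1)
    rw [h0] at h1
    simp only [ContinuousLinearMap.zero_apply] at h1
    have h2 : ⟪fderiv ℝ Φ x (EuclideanSpace.single k 1), Φ x⟫
        = ⟪Φ x, fderiv ℝ Φ x (EuclideanSpace.single k 1)⟫ := real_inner_comm _ _
    rw [h2] at h1
    have hz : ⟪Φ x, fderiv ℝ Φ x (EuclideanSpace.single k 1)⟫ = 0 := by linarith
    exact hz
  -- partial derivatives of the variation
  have hpd : ∀ (t : ℝ) (k : Fin n), pd k (Xvar f φ Φ t) x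
      = (t * pd k f x) • Φ x + (1 + t * f x + φ t) • pd k Φ x := by
    intro t k
    have hc : DifferentiableAt ℝ (fun y => 1 + t * f y + φ t) x := by
      exact (((hfd.const_mul t).const_add 1).add_const (φ t))
    have hXeq : Xvar f φ Φ t = fun y => (1 + t * f y + φ t) • Φ y := rfl
    have hcf : fderiv ℝ (fun y => 1 + t * f y + φ t) x = t • fderiv ℝ f x := by
      rw [show (fun y => 1 + t * f y + φ t) = fun y => (fun z => 1 + t * f z) y + φ t from rfl]
      rw [fderiv_add_const, fderiv_const_add, fderiv_const_mul hfd]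
    unfold pd
    rw [hXeq, fderiv_fun_smul hc hΦd]
    simp only [ContinuousLinearMap.add_apply, ContinuousLinearMap.smul_apply,
      ContinuousLinearMap.smulRight_apply, hcf]
    rw [smul_eq_mul]
    exact add_comm _ _
  -- the metric as an explicit function of t
  set P : ℝ := pd i f x * pd j f x with hP
  set G : ℝ := gmet Φ x i j with hG
  have hGdef : G = ⟪pd i Φ x, pd j Φ x⟫ := rfl
  have hone : ⟪Φ x, Φ x⟫ = (1:ℝ) := by
    rw [real_inner_self_eq_norm_sq, hsph x hx]; norm_num
  have hF : (fun t => gmet (Xvar f φ Φ t) x i j)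
      = fun t => (1 + t * f x + φ t)^2 * G + t^2 * P := by
    funext t
    show ⟪pd i (Xvar f φ Φ t) x, pd j (Xvar f φ Φ t) x⟫ = _
    rw [hpd t i, hpd t j]
    rw [inner_add_left, inner_add_right, inner_add_right]
    simp only [real_inner_smul_left, real_inner_smul_right]
    have horth2 : ⟪pd i Φ x, Φ x⟫ = 0 := by rw [real_inner_comm]; exact horth i
    rw [hone, horth j, horth2, ← hGdef]
    ring
  rw [hF]
  -- derivatives in t
  have hφder : ∀ t ∈ Ioo (-ε) ε, HasDerivAt φ (deriv φ t) t := fun t ht =>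
    ((hφ.contDiffAt (isOpen_Ioo.mem_nhds ht)).differentiableAt (by simp)).hasDerivAt
  have hφ' : ContDiffOn ℝ (⊤ : ℕ∞) (deriv φ) (Ioo (-ε) ε) :=
    hφ.deriv_of_isOpen isOpen_Ioo (by simp)
  have hφ''d : DifferentiableAt ℝ (deriv φ) 0 :=
    (hφ'.contDiffAt h0n).differentiableAt (by simp)
  have hDF : ∀ t ∈ Ioo (-ε) ε, HasDerivAt (fun s => (1 + s * f x + φ s)^2 * G + s^2 * P)
      (2 * (1 + t * f x + φ t) * (f x + deriv φ t) * G + 2 * t * P) t := by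
    intro t ht
    have h1 : HasDerivAt (fun s => 1 + s * f x + φ s) (f x + deriv φ t) t := by
      have := (((hasDerivAt_id t).mul_const (f x)).const_add 1).fun_add (hφder t ht)
      simpa using this
    have h2 := ((h1.fun_pow 2).mul_const G).fun_add (((hasDerivAt_pow 2 t).mul_const P))
    refine h2.congr_deriv ?_
    ring
  have hev : deriv (fun s => (1 + s * f x + φ s)^2 * G + s^2 * P)
      =ᶠ[nhds 0] fun t => 2 * (1 + t * f x + φ t) * (f x + deriv φ t) * G + 2 * t * P := by
    filter_upwards [h0n] with t ht
    exact (hDF t ht).deriv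
  rw [hev.deriv_eq]
  have h10 : HasDerivAt (fun s => 1 + s * f x + φ s) (f x + deriv φ 0) 0 := by
    have := (((hasDerivAt_id 0).mul_const (f x)).const_add 1).fun_add (hφder 0 h0mem)
    simpa using this
  have h2 : HasDerivAt (fun s => f x + deriv φ s) (deriv (deriv φ) 0) 0 :=
    hφ''d.hasDerivAt.const_add (f x)
  have h3 : HasDerivAt (fun t => 2 * (1 + t * f x + φ t) * (f x + deriv φ t) * G + 2 * t * P)
      (((2 * (f x + deriv φ 0)) * (f x + deriv φ 0)
        + (2 * (1 + 0 * f x + φ 0)) * deriv (deriv φ) 0) * G + 2 * 1 * P) 0 := by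
    exact (((h10.const_mul 2).mul h2).mul_const G).add (((hasDerivAt_id 0).const_mul 2).mul_const P)
  rw [h3.deriv]
  rw [hφ0]
  ring
end
end

section
/- For every x ∈ U and all indices i, j, the second derivative of the inverse metric at t = 0 is ∂²g^{ij}(t)/∂t² |_{t=0} = −2 Σ_{p,r} (∂f/∂x_p)(x)(∂f/∂x_r)(x) g^{ip}(x) g^{rj}(x) + 6 (f(x) + φ'(0))² g^{ij}(x) − 2 φ''(0) g^{ij}(x). -/
open MeasureTheory Real Set
open scoped RealInnerProductSpace

noncomputable section

lemma gmet_Xvar_eq {n : ℕ} {U : Set (En n)} (hU : IsOpen U) {Φ : En n → En (n + 1)}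
    {f : En n → ℝ} (φ : ℝ → ℝ) (hΦ : ContDiffOn ℝ (⊤ : ℕ∞) Φ U) (hf : ContDiffOn ℝ (⊤ : ℕ∞) f U)
    (hsph : ∀ x ∈ U, ‖Φ x‖ = 1) {x : En n} (hx : x ∈ U) (t : ℝ) (a b : Fin n) :
    gmet (Xvar f φ Φ t) x a b
      = (1 + t * f x + φ t) ^ 2 * gmet Φ x a b + t ^ 2 * pd a f x * pd b f x := by
  have hfd : DifferentiableAt ℝ f x :=
    (hf.contDiffAt (hU.mem_nhds hx)).differentiableAt (by simp)
  have hΦd : DifferentiableAt ℝ Φ x :=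
    (hΦ.contDiffAt (hU.mem_nhds hx)).differentiableAt (by simp)
  -- orthogonality
  have horth : ∀ v : En n, ⟪Φ x, fderiv ℝ Φ x v⟫ = 0 := by
    intro v
    have hone : (fun y => ⟪Φ y, Φ y⟫) =ᶠ[nhds x] fun _ => (1 : ℝ) := by
      filter_upwards [hU.mem_nhds hx] with y hy
      rw [real_inner_self_eq_norm_sq, hsph y hy]; norm_num
    have hD : HasFDerivAt (fun y => ⟪Φ y, Φ y⟫)
        ((fderivInnerCLM ℝ (Φ x, Φ x)).comp ((fderiv ℝ Φ x).prod (fderiv ℝ Φ x))) x :=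
      hΦd.hasFDerivAt.inner ℝ hΦd.hasFDerivAt
    have h0 : fderiv ℝ (fun y => ⟪Φ y, Φ y⟫) x = 0 := by
      rw [hone.fderiv_eq]; exact fderiv_const_apply 1
    have := hD.fderiv
    rw [h0] at this
    have h2 : ((fderivInnerCLM ℝ (Φ x, Φ x)).comp ((fderiv ℝ Φ x).prod (fderiv ℝ Φ x))) v
        = (0 : ℝ) := by rw [← this]; rfl
    simp only [ContinuousLinearMap.coe_comp', Function.comp_apply,
      ContinuousLinearMap.prod_apply, fderivInnerCLM_apply, ContinuousLinearMap.zero_apply] at h2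
    have hcomm : ⟪Φ x, fderiv ℝ Φ x v⟫ = ⟪fderiv ℝ Φ x v, Φ x⟫ := real_inner_comm _ _
    linarith [h2, hcomm]
  have hc : HasFDerivAt (fun y => 1 + t * f y + φ t) (t • fderiv ℝ f x) x := by
    have h1 : HasFDerivAt (fun y => t * f y) (t • fderiv ℝ f x) x :=
      hfd.hasFDerivAt.const_mul t
    exact (h1.const_add 1).add_const (φ t)
  have hX : HasFDerivAt (fun y => (1 + t * f y + φ t) • Φ y)
      ((1 + t * f x + φ t) • fderiv ℝ Φ x + (t • fderiv ℝ f x).smulRight (Φ x)) x :=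
    hc.smul hΦd.hasFDerivAt
  have hpdX : ∀ c : Fin n, pd c (Xvar f φ Φ t) x
      = (1 + t * f x + φ t) • pd c Φ x + (t * pd c f x) • Φ x := by
    intro c
    have : Xvar f φ Φ t = fun y => (1 + t * f y + φ t) • Φ y := rfl
    rw [pd, this, hX.fderiv]
    simp [pd, ContinuousLinearMap.smulRight_apply, smul_smul]
  have hΦΦ : ⟪Φ x, Φ x⟫ = 1 := by
    rw [real_inner_self_eq_norm_sq, hsph x hx]; norm_num
  rw [gmet, Matrix.of_apply, hpdX a, hpdX b]
  rw [inner_add_left, inner_add_right, inner_add_right]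
  rw [real_inner_smul_left, real_inner_smul_left, real_inner_smul_left, real_inner_smul_left,
    real_inner_smul_right, real_inner_smul_right, real_inner_smul_right, real_inner_smul_right]
  have h1 : ⟪Φ x, pd b Φ x⟫ = 0 := horth _
  have h2 : ⟪pd a Φ x, Φ x⟫ = 0 := by rw [real_inner_comm]; exact horth _
  rw [h1, h2, hΦΦ]
  rw [gmet, Matrix.of_apply]
  ring


lemma sherman {n : ℕ} {G : Matrix (Fin n) (Fin n) ℝ} (hG : G.PosDef)
    (p : Fin n → ℝ) {L T : ℝ} (hL : L ≠ 0)
    (hD : L ^ 2 + T ^ 2 * (∑ k, p k * (∑ l, G⁻¹ k l * p l)) ≠ 0) :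
    (L ^ 2 • G + T ^ 2 • Matrix.of (fun a b => p a * p b))⁻¹
      = (L ^ 2)⁻¹ • G⁻¹
        - (T ^ 2 * (L ^ 2)⁻¹ * (L ^ 2 + T ^ 2 * (∑ k, p k * (∑ l, G⁻¹ k l * p l)))⁻¹) •
          Matrix.of (fun a b => (∑ l, G⁻¹ a l * p l) * (∑ l, G⁻¹ b l * p l)) := by
  set q : Fin n → ℝ := fun a => ∑ l, G⁻¹ a l * p l with hqdef
  set s : ℝ := ∑ k, p k * q k with hsdef
  have hL2 : (L : ℝ) ^ 2 ≠ 0 := pow_ne_zero 2 hL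
  have hdet : IsUnit G.det := hG.det_pos.ne'.isUnit
  have hGGi : G * G⁻¹ = 1 := Matrix.mul_nonsing_inv G hdet
  have hsym : ∀ k b : Fin n, G⁻¹ k b = G⁻¹ b k := by
    intro k b
    have := (hG.isHermitian.inv).apply k b
    simpa using this.symm
  have hq1 : ∀ a : Fin n, ∑ k, G a k * q k = p a := by
    intro a
    calc ∑ k, G a k * q k = ∑ k, ∑ l, G a k * (G⁻¹ k l * p l) := by
          simp_rw [hqdef, Finset.mul_sum]
      _ = ∑ l, ∑ k, G a k * (G⁻¹ k l * p l) := Finset.sum_comm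
      _ = ∑ l, (∑ k, G a k * G⁻¹ k l) * p l := by
          congr 1; ext l; rw [Finset.sum_mul]; congr 1; ext k; ring
      _ = ∑ l, (1 : Matrix (Fin n) (Fin n) ℝ) a l * p l := by
          congr 1; ext l; rw [← Matrix.mul_apply, hGGi]
      _ = p a := by simp [Matrix.one_apply]
  have hq2 : ∀ b : Fin n, ∑ k, p k * G⁻¹ k b = q b := by
    intro b
    rw [hqdef]
    congr 1; ext k; rw [hsym k b]; ring
  apply Matrix.inv_eq_right_inv
  ext a b
  rw [Matrix.mul_apply]
  simp only [Matrix.add_apply, Matrix.smul_apply, Matrix.sub_apply, Matrix.of_apply,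
    smul_eq_mul]
  set c : ℝ := T ^ 2 * (L ^ 2)⁻¹ * (L ^ 2 + T ^ 2 * s)⁻¹ with hcdef
  have hterm : ∀ k, (L ^ 2 * G a k + T ^ 2 * (p a * p k)) *
      ((L ^ 2)⁻¹ * G⁻¹ k b - c * (q k * q b))
      = (L ^ 2 * (L ^ 2)⁻¹) * (G a k * G⁻¹ k b) + (-(L ^ 2 * c * q b)) * (G a k * q k)
        + (T ^ 2 * (L ^ 2)⁻¹ * p a) * (p k * G⁻¹ k b) + (-(T ^ 2 * c * p a * q b)) * (p k * q k) :=
    fun k => by ring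
  rw [Finset.sum_congr rfl fun k _ => hterm k]
  simp only [Finset.sum_add_distrib, ← Finset.mul_sum]
  rw [show ∑ k, G a k * G⁻¹ k b = (1 : Matrix (Fin n) (Fin n) ℝ) a b by
    rw [← Matrix.mul_apply, hGGi], hq1 a, hq2 b, ← hsdef]
  rw [hcdef]
  field_simp
  ring


/-- `∂²g^ij/∂t² |_(t=0)
= −2 Σ_(p,r) ∂_p f ∂_r f g^ip g^rj + 6 (f + φ'(0))² g^ij − 2 φ''(0) g^ij`. -/
theorem second_variation_inverse_metric {n : ℕ} (hn : 1 ≤ n) (U : Set (En n)) (hU : IsOpen U)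
    (Φ : En n → En (n + 1)) (f : En n → ℝ) (φ : ℝ → ℝ) (ε : ℝ) (hε : 0 < ε)
    (hΦ : ContDiffOn ℝ (⊤ : ℕ∞) Φ U) (hf : ContDiffOn ℝ (⊤ : ℕ∞) f U)
    (hφ : ContDiffOn ℝ (⊤ : ℕ∞) φ (Ioo (-ε) ε)) (hφ0 : φ 0 = 0)
    (hsph : ∀ x ∈ U, ‖Φ x‖ = 1)
    (himm : ∀ x ∈ U, (gmet Φ x).PosDef) :
    ∀ x ∈ U, ∀ i j : Fin n,
      deriv (deriv (fun t => (gmet (Xvar f φ Φ t) x)⁻¹ i j)) 0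
        = -2 * ∑ p, ∑ r, pd p f x * pd r f x * (gmet Φ x)⁻¹ i p * (gmet Φ x)⁻¹ r j
          + 6 * (f x + deriv φ 0) ^ 2 * (gmet Φ x)⁻¹ i j
          - 2 * deriv (deriv φ) 0 * (gmet Φ x)⁻¹ i j := by
  intro x hx i j
  have hε0 : (0 : ℝ) ∈ Ioo (-ε) ε := ⟨by linarith, hε⟩
  have hIoo : Ioo (-ε) ε ∈ nhds (0 : ℝ) := isOpen_Ioo.mem_nhds hε0
  set G : Matrix (Fin n) (Fin n) ℝ := gmet Φ x with hGdef
  set pp : Fin n → ℝ := fun a => pd a f x with hppdef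
  set qq : Fin n → ℝ := fun a => ∑ l, G⁻¹ a l * pp l with hqqdef
  set s : ℝ := ∑ k, pp k * qq k with hsdef
  set a0 : ℝ := f x with ha0
  set lam : ℝ → ℝ := fun t => 1 + t * a0 + φ t with hlamdef
  set ℓ : ℝ → ℝ := fun t => deriv φ t with hℓdef
  set rr : ℝ := G⁻¹ i j with hrrdef
  set Q0 : ℝ := qq i * qq j with hQ0def
  have hlam0 : lam 0 = 1 := by simp [hlamdef, hφ0]
  have hseq : s = ∑ k, pp k * (∑ l, G⁻¹ k l * pp l) := by
    rw [hsdef]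
  -- continuity facts
  have hφc : ContinuousAt φ 0 := (hφ.continuousOn.continuousAt hIoo)
  have hlamc : ContinuousAt lam 0 := by
    rw [hlamdef]
    exact (continuousAt_const.add (continuousAt_id.mul continuousAt_const)).add hφc
  have h1 : ∀ᶠ t in nhds (0 : ℝ), lam t ≠ 0 :=
    hlamc.eventually_ne (by rw [hlam0]; norm_num)
  have hEc : ContinuousAt (fun t => lam t ^ 2 + t ^ 2 * s) 0 :=
    (hlamc.pow 2).add ((continuousAt_id.pow 2).mul continuousAt_const)
  have h2 : ∀ᶠ t in nhds (0 : ℝ), lam t ^ 2 + t ^ 2 * s ≠ 0 :=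
    hEc.eventually_ne (by simp [hlam0])
  -- the explicit formula for the inverse-metric entry
  set F : ℝ → ℝ := fun t =>
    (lam t ^ 2)⁻¹ * rr - t ^ 2 * (lam t ^ 2)⁻¹ * (lam t ^ 2 + t ^ 2 * s)⁻¹ * Q0 with hFdef
  have hev : (fun t => (gmet (Xvar f φ Φ t) x)⁻¹ i j) =ᶠ[nhds 0] F := by
    filter_upwards [h1, h2] with t ht1 ht2
    have hA : gmet (Xvar f φ Φ t) x
        = lam t ^ 2 • G + t ^ 2 • Matrix.of (fun a b => pp a * pp b) := by
      ext a b
      rw [gmet_Xvar_eq hU φ hΦ hf hsph hx t a b]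
      simp only [Matrix.add_apply, Matrix.smul_apply, Matrix.of_apply, smul_eq_mul,
        hlamdef, hppdef, ha0, hGdef]
      ring
    have hD' : lam t ^ 2 + t ^ 2 * (∑ k, pp k * (∑ l, G⁻¹ k l * pp l)) ≠ 0 := by
      rw [← hseq]; exact ht2
    rw [hA, sherman (by rw [hGdef]; exact himm x hx) pp ht1 hD']
    simp only [Matrix.sub_apply, Matrix.smul_apply, Matrix.of_apply, smul_eq_mul]
    rfl
  -- derivative facts
  have hld : ∀ t ∈ Ioo (-ε) ε, HasDerivAt φ (ℓ t) t := by
    intro t ht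
    exact ((hφ.differentiableOn (by simp)).differentiableAt
      (isOpen_Ioo.mem_nhds ht)).hasDerivAt
  have hlamd : ∀ t ∈ Ioo (-ε) ε, HasDerivAt lam (a0 + ℓ t) t := by
    intro t ht
    have h := (((hasDerivAt_id t).mul_const a0).const_add (1 : ℝ)).add (hld t ht)
    rw [hlamdef]
    convert h using 1; rfl; rfl; rfl
    ring
  set G1 : ℝ → ℝ := fun t =>
    -(2 * lam t * (a0 + ℓ t)) / (lam t ^ 2) ^ 2 * rr
    - (2 * t * ((lam t ^ 2)⁻¹ * (lam t ^ 2 + t ^ 2 * s)⁻¹)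
       + t ^ 2 * (-(2 * lam t * (a0 + ℓ t)) / (lam t ^ 2) ^ 2 * (lam t ^ 2 + t ^ 2 * s)⁻¹
           + (lam t ^ 2)⁻¹ *
             (-(2 * lam t * (a0 + ℓ t) + 2 * t * s) / (lam t ^ 2 + t ^ 2 * s) ^ 2))) * Q0
    with hG1def
  have hV : ∀ᶠ t in nhds (0 : ℝ),
      t ∈ Ioo (-ε) ε ∧ lam t ≠ 0 ∧ lam t ^ 2 + t ^ 2 * s ≠ 0 := by
    filter_upwards [hIoo, h1, h2] with t ha hb hc
    exact ⟨ha, hb, hc⟩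
  have hFd : ∀ᶠ t in nhds (0 : ℝ), HasDerivAt F (G1 t) t := by
    filter_upwards [hV] with t ht
    obtain ⟨htI, hne1, hne2⟩ := ht
    have hL2ne : lam t ^ 2 ≠ 0 := pow_ne_zero _ hne1
    have hLd : HasDerivAt (fun τ => lam τ ^ 2) (2 * lam t * (a0 + ℓ t)) t := by
      have h := (hlamd t htI).pow 2
      convert h using 1; rfl; rfl; rfl; push_cast; ring
    have hu : HasDerivAt (fun τ => (lam τ ^ 2)⁻¹)
        (-(2 * lam t * (a0 + ℓ t)) / (lam t ^ 2) ^ 2) t := hLd.inv hL2ne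
    have htsq : HasDerivAt (fun τ : ℝ => τ ^ 2) (2 * t) t := by
      simpa using hasDerivAt_pow 2 t
    have hden : HasDerivAt (fun τ => lam τ ^ 2 + τ ^ 2 * s)
        (2 * lam t * (a0 + ℓ t) + 2 * t * s) t := hLd.add (htsq.mul_const s)
    have hv : HasDerivAt (fun τ => (lam τ ^ 2 + τ ^ 2 * s)⁻¹)
        (-(2 * lam t * (a0 + ℓ t) + 2 * t * s) / (lam t ^ 2 + t ^ 2 * s) ^ 2) t :=
      hden.inv hne2
    have h1' : HasDerivAt (fun τ => (lam τ ^ 2)⁻¹ * rr)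
        (-(2 * lam t * (a0 + ℓ t)) / (lam t ^ 2) ^ 2 * rr) t := hu.mul_const rr
    have h2' := (((htsq.mul hu).mul hv).mul_const Q0)
    have h := h1'.sub h2'
    rw [hFdef, hG1def]
    convert h using 1; rfl; rfl; rfl
    simp only [Pi.mul_apply]
    ring
  have hderivF : deriv F =ᶠ[nhds (0 : ℝ)] G1 := hFd.mono fun t h => h.deriv
  -- second derivative of G1 at 0
  have hℓC : ContDiffOn ℝ (⊤ : ℕ∞) (deriv φ) (Ioo (-ε) ε) := hφ.deriv_of_isOpen isOpen_Ioo (by simp)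
  have hℓd : HasDerivAt ℓ (deriv (deriv φ) 0) 0 := by
    rw [hℓdef]
    exact ((hℓC.differentiableOn (by simp)).differentiableAt hIoo).hasDerivAt
  have hlam0d : HasDerivAt lam (a0 + ℓ 0) 0 := hlamd 0 hε0
  have hone : lam 0 ^ 2 ≠ 0 := by rw [hlam0]; norm_num
  have honeE : lam 0 ^ 2 + (0 : ℝ) ^ 2 * s ≠ 0 := by rw [hlam0]; norm_num
  have hL2d : HasDerivAt (fun τ => lam τ ^ 2) (2 * lam 0 * (a0 + ℓ 0)) 0 := by
    have h := hlam0d.pow 2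
    convert h using 1; rfl; rfl; rfl; push_cast; ring
  have htsq0 : HasDerivAt (fun τ : ℝ => τ ^ 2) (2 * (0 : ℝ)) 0 := by
    simpa using hasDerivAt_pow 2 (0 : ℝ)
  have hEd : HasDerivAt (fun τ => lam τ ^ 2 + τ ^ 2 * s)
      (2 * lam 0 * (a0 + ℓ 0) + 2 * (0 : ℝ) * s) 0 := hL2d.add (htsq0.mul_const s)
  have hNum : HasDerivAt (fun τ => -(2 * lam τ * (a0 + ℓ τ)))
      (-((2 * (a0 + ℓ 0)) * (a0 + ℓ 0) + (2 * lam 0) * deriv (deriv φ) 0)) 0 :=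
    ((hlam0d.const_mul 2).mul (hℓd.const_add a0)).neg
  have hL2sq : HasDerivAt (fun τ => (lam τ ^ 2) ^ 2)
      ((2 : ℕ) * (lam 0 ^ 2) ^ 1 * (2 * lam 0 * (a0 + ℓ 0))) 0 := hL2d.pow 2
  have hL2sqne : (lam 0 ^ 2) ^ 2 ≠ 0 := pow_ne_zero _ hone
  have hA0 := hNum.div hL2sq hL2sqne
  have hu0 := hL2d.inv hone
  have hv0 := hEd.inv honeE
  have hEsq : HasDerivAt (fun τ => (lam τ ^ 2 + τ ^ 2 * s) ^ 2)
      ((2 : ℕ) * (lam 0 ^ 2 + (0 : ℝ) ^ 2 * s) ^ 1 * (2 * lam 0 * (a0 + ℓ 0) + 2 * (0 : ℝ) * s))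
      0 := hEd.pow 2
  have hEsqne : (lam 0 ^ 2 + (0 : ℝ) ^ 2 * s) ^ 2 ≠ 0 := pow_ne_zero _ honeE
  have hNum2 : HasDerivAt (fun τ => -(2 * lam τ * (a0 + ℓ τ) + 2 * τ * s))
      (-(((2 * (a0 + ℓ 0)) * (a0 + ℓ 0) + (2 * lam 0) * deriv (deriv φ) 0) + 2 * s)) 0 := by
    have h := (((hlam0d.const_mul 2).mul (hℓd.const_add a0)).add
      (((hasDerivAt_id (0 : ℝ)).const_mul 2).mul_const s)).neg
    convert h using 1; rfl; rfl; rfl; ring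
  have hC0 := hNum2.div hEsq hEsqne
  have hterm1 := (((hasDerivAt_id (0 : ℝ)).const_mul 2).mul (hu0.mul hv0))
  have hterm2 := htsq0.mul ((hA0.mul hv0).add (hu0.mul hC0))
  have hG1d := (hA0.mul_const rr).sub ((hterm1.add hterm2).mul_const Q0)
  -- assemble
  have key : deriv (deriv (fun t => (gmet (Xvar f φ Φ t) x)⁻¹ i j)) 0 = deriv G1 0 := by
    rw [hev.deriv.deriv_eq, hderivF.deriv_eq]
  have hval : deriv G1 0 = _ := hG1d.deriv
  rw [key, hval]
  -- sum identity
  have hdet : IsUnit G.det := (himm x hx).det_pos.ne'.isUnit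
  have hsym : ∀ k b : Fin n, G⁻¹ k b = G⁻¹ b k := by
    intro k b
    have := ((himm x hx).isHermitian.inv).apply k b
    simpa using this.symm
  have hsum : ∑ p, ∑ r0, pd p f x * pd r0 f x * G⁻¹ i p * G⁻¹ r0 j = qq i * qq j := by
    have h1s : (∑ p, pd p f x * G⁻¹ i p) = qq i := by
      rw [hqqdef]; exact Finset.sum_congr rfl fun k _ => by rw [hppdef]; ring
    have h2s : (∑ r0, pd r0 f x * G⁻¹ r0 j) = qq j := by
      rw [hqqdef]
      exact Finset.sum_congr rfl fun k _ => by rw [hppdef, hsym k j]; ring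
    rw [← h1s, ← h2s, Finset.sum_mul_sum]
    exact Finset.sum_congr rfl fun p _ => Finset.sum_congr rfl fun r0 _ => by ring
  rw [hsum]
  have hℓ0 : ℓ 0 = deriv φ 0 := rfl
  simp only [hQ0def, hlam0, hℓ0, id_eq]
  push_cast
  norm_num
  simp only [hlam0, inv_one, one_pow, one_mul]
  ring
end
end

section
/- For every x ∈ U, the second derivative of the volume element at t = 0 is ∂²√(g(t))/∂t² |_{t=0} = [ |∇f(x)|² + (n² − n)(f(x) + φ'(0))² + n φ''(0) ] √(g(x)). -/
open MeasureTheory Real Set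
open scoped RealInnerProductSpace

noncomputable section

lemma pd_Xvar {n : ℕ} (f : En n → ℝ) (φ : ℝ → ℝ) (Φ : En n → En (n + 1)) (t : ℝ) (x : En n)
    (hf : DifferentiableAt ℝ f x) (hΦ : DifferentiableAt ℝ Φ x) (i : Fin n) :
    pd i (Xvar f φ Φ t) x
      = (t * pd i f x) • Φ x + (1 + t * f x + φ t) • pd i Φ x := by
  have hc : HasFDerivAt (fun y => 1 + t * f y + φ t)
      ((t • fderiv ℝ f x : En n →L[ℝ] ℝ)) x := by
    have h1 : HasFDerivAt f (fderiv ℝ f x) x := hf.hasFDerivAt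
    have := ((h1.const_mul t).const_add 1).add_const (φ t)
    simpa using this
  have hX : HasFDerivAt (Xvar f φ Φ t)
      ((1 + t * f x + φ t) • fderiv ℝ Φ x
        + ((t • fderiv ℝ f x : En n →L[ℝ] ℝ)).smulRight (Φ x)) x := by
    exact hc.smul hΦ.hasFDerivAt
  rw [pd, hX.fderiv]
  simp [pd]
  ring_nf
  module

lemma inner_pd_zero {n : ℕ} (U : Set (En n)) (hU : IsOpen U) (Φ : En n → En (n + 1))
    (hΦ : ∀ y ∈ U, DifferentiableAt ℝ Φ y) (hsph : ∀ y ∈ U, ‖Φ y‖ = 1)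
    {x : En n} (hx : x ∈ U) (i : Fin n) : ⟪Φ x, pd i Φ x⟫ = 0 := by
  have hD : HasFDerivAt (fun y => ⟪Φ y, Φ y⟫)
      ((fderivInnerCLM ℝ (Φ x, Φ x)).comp ((fderiv ℝ Φ x).prod (fderiv ℝ Φ x))) x :=
    (hΦ x hx).hasFDerivAt.inner ℝ (hΦ x hx).hasFDerivAt
  have hconst : (fun y => ⟪Φ y, Φ y⟫) =ᶠ[nhds x] fun _ => (1 : ℝ) := by
    filter_upwards [hU.mem_nhds hx] with y hy
    rw [real_inner_self_eq_norm_sq, hsph y hy]; norm_num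
  have h0 : HasFDerivAt (fun y => ⟪Φ y, Φ y⟫) (0 : En n →L[ℝ] ℝ) x := by
    exact (hasFDerivAt_const (1:ℝ) x).congr_of_eventuallyEq hconst
  have := hD.unique h0
  have h2 := congrFun (congrArg DFunLike.coe this) (EuclideanSpace.single i 1)
  simp only [ContinuousLinearMap.comp_apply, ContinuousLinearMap.prod_apply,
    fderivInnerCLM_apply, ContinuousLinearMap.zero_apply] at h2
  rw [pd]
  have h3 := real_inner_comm (Φ x) ((fderiv ℝ Φ x) (EuclideanSpace.single i 1))
  linarith

lemma gmet_Xvar {n : ℕ} (U : Set (En n)) (hU : IsOpen U) (f : En n → ℝ) (φ : ℝ → ℝ)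
    (Φ : En n → En (n + 1)) (t : ℝ)
    (hf : ∀ y ∈ U, DifferentiableAt ℝ f y) (hΦ : ∀ y ∈ U, DifferentiableAt ℝ Φ y)
    (hsph : ∀ y ∈ U, ‖Φ y‖ = 1) {x : En n} (hx : x ∈ U) (i j : Fin n) :
    gmet (Xvar f φ Φ t) x i j
      = (1 + t * f x + φ t) ^ 2 * gmet Φ x i j + t ^ 2 * (pd i f x * pd j f x) := by
  have hi := pd_Xvar f φ Φ t x (hf x hx) (hΦ x hx) i
  have hj := pd_Xvar f φ Φ t x (hf x hx) (hΦ x hx) j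
  have horth := inner_pd_zero U hU Φ hΦ hsph hx
  have hone : ⟪Φ x, Φ x⟫ = (1:ℝ) := by
    rw [real_inner_self_eq_norm_sq, hsph x hx]; norm_num
  rw [gmet, Matrix.of_apply, hi, hj, gmet, Matrix.of_apply]
  rw [inner_add_left, inner_add_right, inner_add_right, real_inner_smul_left,
    real_inner_smul_left, real_inner_smul_left, real_inner_smul_left,
    real_inner_smul_right, real_inner_smul_right, real_inner_smul_right,
    real_inner_smul_right, hone, horth j]
  have h4 : ⟪pd i Φ x, Φ x⟫ = (0:ℝ) := by rw [real_inner_comm]; exact horth i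
  rw [h4]
  ring

lemma det_gmet_Xvar {n : ℕ} (U : Set (En n)) (hU : IsOpen U) (f : En n → ℝ) (φ : ℝ → ℝ)
    (Φ : En n → En (n + 1)) (t : ℝ)
    (hf : ∀ y ∈ U, DifferentiableAt ℝ f y) (hΦ : ∀ y ∈ U, DifferentiableAt ℝ Φ y)
    (hsph : ∀ y ∈ U, ‖Φ y‖ = 1) {x : En n} (hx : x ∈ U)
    (hn : 1 ≤ n) (hpd : (gmet Φ x).PosDef) (ha : (1 + t * f x + φ t) ≠ 0) :
    (gmet (Xvar f φ Φ t) x).det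
      = (1 + t * f x + φ t) ^ (2 * (n - 1)) * (gmet Φ x).det
          * ((1 + t * f x + φ t) ^ 2 + t ^ 2 * gradSq Φ f x) := by
  set a := 1 + t * f x + φ t with hadef
  set g := gmet Φ x with hgdef
  set v : Fin n → ℝ := fun i => t * pd i f x with hvdef
  have hM : gmet (Xvar f φ Φ t) x
      = (a ^ 2 • g) + Matrix.replicateCol Unit v * Matrix.replicateRow Unit v := by
    ext i j
    rw [gmet_Xvar U hU f φ Φ t hf hΦ hsph hx i j]
    simp [Matrix.mul_apply, v]
    ring
  have hdetg : IsUnit g.det := isUnit_iff_ne_zero.mpr (ne_of_gt hpd.det_pos)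
  have hdetA : IsUnit (a ^ 2 • g).det := by
    rw [Matrix.det_smul]
    exact (isUnit_iff_ne_zero.mpr (by positivity)).mul hdetg
  have hinv : (a ^ 2 • g)⁻¹ = (a ^ 2)⁻¹ • g⁻¹ := by
    have h1 : Invertible (a ^ 2) := invertibleOfNonzero (by positivity)
    rw [Matrix.inv_smul g (a ^ 2) hdetg, invOf_eq_inv]
  have hentry : (1 + Matrix.replicateRow Unit v * ((a ^ 2)⁻¹ • g⁻¹) * Matrix.replicateCol Unit v).det
      = 1 + (a ^ 2)⁻¹ * (t ^ 2 * gradSq Φ f x) := by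
    rw [Matrix.det_unique]
    simp only [Matrix.add_apply, Matrix.one_apply_eq, Matrix.mul_apply, Matrix.smul_apply,
      Matrix.replicateRow_apply, Matrix.replicateCol_apply, Finset.univ_unique, Finset.sum_singleton, gradSq,
      smul_eq_mul, Finset.mul_sum, Finset.sum_mul]
    congr 1
    rw [Finset.sum_comm]
    refine Finset.sum_congr rfl fun i _ => Finset.sum_congr rfl fun j _ => ?_
    rw [← hgdef, hvdef]
    ring
  rw [hM, Matrix.det_add_replicateCol_mul_replicateRow hdetA, hinv, hentry, Matrix.det_smul, Fintype.card_fin]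
  have h2 : (a:ℝ) ^ (2 * (n-1)) * a ^ 2 = a ^ (2 * n) := by
    rw [← pow_add]
    congr 1
    omega
  have h3 : ((a:ℝ) ^ 2) ^ n = a ^ (2 * n) := by rw [← pow_mul]
  field_simp
  rw [h3, ← h2]
  ring

lemma vElem_Xvar {n : ℕ} (U : Set (En n)) (hU : IsOpen U) (f : En n → ℝ) (φ : ℝ → ℝ)
    (Φ : En n → En (n + 1)) (t : ℝ)
    (hf : ∀ y ∈ U, DifferentiableAt ℝ f y) (hΦ : ∀ y ∈ U, DifferentiableAt ℝ Φ y)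
    (hsph : ∀ y ∈ U, ‖Φ y‖ = 1) {x : En n} (hx : x ∈ U)
    (hn : 1 ≤ n) (hpd : (gmet Φ x).PosDef) (ha : 0 < 1 + t * f x + φ t) :
    vElem (Xvar f φ Φ t) x
      = (1 + t * f x + φ t) ^ (n - 1)
          * Real.sqrt ((1 + t * f x + φ t) ^ 2 + t ^ 2 * gradSq Φ f x) * vElem Φ x := by
  rw [vElem, det_gmet_Xvar U hU f φ Φ t hf hΦ hsph hx hn hpd (ne_of_gt ha)]
  rw [Real.sqrt_mul (mul_nonneg (by positivity) hpd.det_pos.le),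
    Real.sqrt_mul (by positivity : (0:ℝ) ≤ (1 + t * f x + φ t) ^ (2 * (n - 1)))]
  rw [show (1 + t * f x + φ t) ^ (2 * (n-1)) = ((1 + t * f x + φ t) ^ (n-1)) ^ 2 by
    rw [← pow_mul, Nat.mul_comm]]
  rw [Real.sqrt_sq (by positivity)]
  rw [vElem]
  ring

lemma aux_deriv2 (n : ℕ) (hn : 1 ≤ n) (c Q C : ℝ)
    (φ F : ℝ → ℝ) (hφ0 : φ 0 = 0)
    (hd1 : ∀ᶠ t in nhds (0:ℝ), HasDerivAt φ (deriv φ t) t)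
    (hd2 : ∀ᶠ t in nhds (0:ℝ), HasDerivAt (deriv φ) (deriv (deriv φ) t) t)
    (hF : ∀ᶠ t in nhds (0:ℝ), F t
      = (1 + t * c + φ t) ^ (n - 1) * Real.sqrt ((1 + t * c + φ t) ^ 2 + t ^ 2 * Q) * C) :
    deriv (deriv F) 0
      = (Q + ((n:ℝ) ^ 2 - (n:ℝ)) * (c + deriv φ 0) ^ 2 + (n:ℝ) * deriv (deriv φ) 0) * C := by
  have hA : ∀ᶠ t in nhds (0:ℝ), HasDerivAt (fun u => 1 + u * c + φ u) (c + deriv φ t) t := by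
    filter_upwards [hd1] with t h
    have := (((hasDerivAt_id t).mul_const c).const_add 1).add h
    refine this.congr_deriv ?_; simp
  have hA' : ∀ᶠ t in nhds (0:ℝ),
      HasDerivAt (fun u => c + deriv φ u) (deriv (deriv φ) t) t := by
    filter_upwards [hd2] with t h
    simpa using h.const_add c
  have hs : ∀ᶠ t in nhds (0:ℝ),
      HasDerivAt (fun u => (1 + u * c + φ u) ^ 2 + u ^ 2 * Q)
        (2 * (1 + t * c + φ t) * (c + deriv φ t) + 2 * t * Q) t := by
    filter_upwards [hA] with t h
    have h2 := (h.pow 2).add ((hasDerivAt_pow 2 t).mul_const Q)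
    refine h2.congr_deriv ?_
    push_cast
    ring
  have hspos : ∀ᶠ t in nhds (0:ℝ), 0 < (1 + t * c + φ t) ^ 2 + t ^ 2 * Q := by
    have hcs : ContinuousAt (fun u => (1 + u * c + φ u) ^ 2 + u ^ 2 * Q) 0 :=
      (hs.self_of_nhds).differentiableAt.continuousAt
    have h1 : (0:ℝ) < (1 + 0 * c + φ 0) ^ 2 + (0:ℝ) ^ 2 * Q := by
      simp [hφ0]
    exact hcs (Ioi_mem_nhds h1)
  have hG' : ∀ᶠ t in nhds (0:ℝ),
      HasDerivAt (fun u => (1 + u * c + φ u) ^ (n - 1)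
          * Real.sqrt ((1 + u * c + φ u) ^ 2 + u ^ 2 * Q) * C)
        ((↑(n-1) * (1 + t * c + φ t) ^ (n - 1 - 1) * (c + deriv φ t)
            * Real.sqrt ((1 + t * c + φ t) ^ 2 + t ^ 2 * Q)
          + (1 + t * c + φ t) ^ (n - 1)
            * ((2 * (1 + t * c + φ t) * (c + deriv φ t) + 2 * t * Q)
              / (2 * Real.sqrt ((1 + t * c + φ t) ^ 2 + t ^ 2 * Q)))) * C) t := by
    filter_upwards [hA, hs, hspos] with t h1 h2 h3
    exact ((h1.pow (n-1)).mul (h2.sqrt (ne_of_gt h3))).mul_const C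
  have key : deriv F =ᶠ[nhds (0:ℝ)]
      fun t => (↑(n-1) * (1 + t * c + φ t) ^ (n - 1 - 1) * (c + deriv φ t)
            * Real.sqrt ((1 + t * c + φ t) ^ 2 + t ^ 2 * Q)
          + (1 + t * c + φ t) ^ (n - 1)
            * ((2 * (1 + t * c + φ t) * (c + deriv φ t) + 2 * t * Q)
              / (2 * Real.sqrt ((1 + t * c + φ t) ^ 2 + t ^ 2 * Q)))) * C := by
    have e1 := Filter.EventuallyEq.deriv (hF : F =ᶠ[nhds (0:ℝ)] _)
    filter_upwards [e1, hG'] with t h1 h2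
    rw [h1, h2.deriv]
  rw [key.deriv_eq]
  -- point facts at 0
  have h0A : HasDerivAt (fun u => 1 + u * c + φ u) (c + deriv φ 0) 0 := hA.self_of_nhds
  have h0A' : HasDerivAt (fun u => c + deriv φ u) (deriv (deriv φ) 0) 0 := hA'.self_of_nhds
  have h0s : HasDerivAt (fun u => (1 + u * c + φ u) ^ 2 + u ^ 2 * Q)
      (2 * (1 + 0 * c + φ 0) * (c + deriv φ 0) + 2 * 0 * Q) 0 := hs.self_of_nhds
  have hs0ne : (1 + 0 * c + φ 0) ^ 2 + (0:ℝ) ^ 2 * Q ≠ 0 := by simp [hφ0]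
  have h0sq : HasDerivAt (fun u => Real.sqrt ((1 + u * c + φ u) ^ 2 + u ^ 2 * Q))
      ((2 * (1 + 0 * c + φ 0) * (c + deriv φ 0) + 2 * 0 * Q)
        / (2 * Real.sqrt ((1 + 0 * c + φ 0) ^ 2 + (0:ℝ) ^ 2 * Q))) 0 := h0s.sqrt hs0ne
  have h0s' : HasDerivAt (fun u => 2 * (1 + u * c + φ u) * (c + deriv φ u) + 2 * u * Q)
      (((2 * (c + deriv φ 0)) * (c + deriv φ 0)
          + (2 * (1 + 0 * c + φ 0)) * deriv (deriv φ) 0) + (2 * 1) * Q) 0 := by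
    exact ((h0A.const_mul 2).mul h0A').add (((hasDerivAt_id (0:ℝ)).const_mul 2).mul_const Q)
  have hden_ne : 2 * Real.sqrt ((1 + 0 * c + φ 0) ^ 2 + (0:ℝ) ^ 2 * Q) ≠ 0 := by
    simp [hφ0]
  obtain ⟨D, hD, hval⟩ : ∃ D,
      HasDerivAt (fun t => (↑(n-1) * (1 + t * c + φ t) ^ (n - 1 - 1) * (c + deriv φ t)
            * Real.sqrt ((1 + t * c + φ t) ^ 2 + t ^ 2 * Q)
          + (1 + t * c + φ t) ^ (n - 1)
            * ((2 * (1 + t * c + φ t) * (c + deriv φ t) + 2 * t * Q)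
              / (2 * Real.sqrt ((1 + t * c + φ t) ^ 2 + t ^ 2 * Q)))) * C) D 0
        ∧ D = (Q + ((n:ℝ) ^ 2 - (n:ℝ)) * (c + deriv φ 0) ^ 2
            + (n:ℝ) * deriv (deriv φ) 0) * C := by
    refine ⟨_, ((((((h0A.pow (n-1-1)).const_mul ((n-1 : ℕ):ℝ)).mul h0A').mul h0sq).add
      ((h0A.pow (n-1)).mul (h0s'.div (h0sq.const_mul 2) hden_ne))).mul_const C), ?_⟩
    have hm1 : ((n-1 : ℕ):ℝ) = (n:ℝ) - 1 := by
      rw [Nat.cast_sub hn]; norm_num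
    have hm2 : ((n:ℝ) - 1) * ((n-1-1 : ℕ):ℝ) = (n:ℝ) ^ 2 - 3 * n + 2 := by
      rcases Nat.lt_or_ge n 2 with h | h
      · have : n = 1 := by omega
        subst this; norm_num
      · rw [Nat.cast_sub (by omega : 1 ≤ n - 1), Nat.cast_sub hn]
        push_cast
        ring
    simp only [hφ0, mul_zero, zero_mul, add_zero, mul_one, one_pow]
    norm_num [Real.sqrt_one, hφ0]
    rw [hm1]
    refine Or.inl ?_
    linear_combination ((c + deriv φ 0) * (c + deriv φ 0)) * hm2
  rw [hD.deriv, hval]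

/-- `∂²√(g(t))/∂t² |_(t=0)
= [|∇f|² + (n² − n)(f + φ'(0))² + n φ''(0)] √g`. -/
theorem second_variation_volume_element {n : ℕ} (hn : 1 ≤ n) (U : Set (En n)) (hU : IsOpen U)
    (Φ : En n → En (n + 1)) (f : En n → ℝ) (φ : ℝ → ℝ) (ε : ℝ) (hε : 0 < ε)
    (hΦ : ContDiffOn ℝ (⊤ : ℕ∞) Φ U) (hf : ContDiffOn ℝ (⊤ : ℕ∞) f U)
    (hφ : ContDiffOn ℝ (⊤ : ℕ∞) φ (Ioo (-ε) ε)) (hφ0 : φ 0 = 0)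
    (hsph : ∀ x ∈ U, ‖Φ x‖ = 1)
    (himm : ∀ x ∈ U, (gmet Φ x).PosDef) :
    ∀ x ∈ U,
      deriv (deriv (fun t => vElem (Xvar f φ Φ t) x)) 0
        = (gradSq Φ f x + ((n : ℝ) ^ 2 - n) * (f x + deriv φ 0) ^ 2
            + (n : ℝ) * deriv (deriv φ) 0) * vElem Φ x := by
  intro x hx
  have hIoo : Ioo (-ε) ε ∈ nhds (0:ℝ) := isOpen_Ioo.mem_nhds ⟨by linarith, hε⟩
  have hφ' : ContDiffOn ℝ (⊤ : ℕ∞) (deriv φ) (Ioo (-ε) ε) := hφ.deriv_of_isOpen isOpen_Ioo (by simp)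
  have hd1 : ∀ᶠ t in nhds (0:ℝ), HasDerivAt φ (deriv φ t) t := by
    filter_upwards [hIoo] with t ht
    exact ((hφ.contDiffAt (isOpen_Ioo.mem_nhds ht)).differentiableAt (by simp)).hasDerivAt
  have hd2 : ∀ᶠ t in nhds (0:ℝ), HasDerivAt (deriv φ) (deriv (deriv φ) t) t := by
    filter_upwards [hIoo] with t ht
    exact ((hφ'.contDiffAt (isOpen_Ioo.mem_nhds ht)).differentiableAt (by simp)).hasDerivAt
  have hfd : ∀ y ∈ U, DifferentiableAt ℝ f y := fun y hy =>
    (hf.contDiffAt (hU.mem_nhds hy)).differentiableAt (by simp)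
  have hΦd : ∀ y ∈ U, DifferentiableAt ℝ Φ y := fun y hy =>
    (hΦ.contDiffAt (hU.mem_nhds hy)).differentiableAt (by simp)
  have hcont : ContinuousAt (fun t : ℝ => 1 + t * f x + φ t) 0 := by
    exact (continuousAt_const.add (continuousAt_id.mul continuousAt_const)).add
      hd1.self_of_nhds.continuousAt
  have hapos : ∀ᶠ t in nhds (0:ℝ), 0 < 1 + t * f x + φ t := by
    have h1 : (0:ℝ) < 1 + 0 * f x + φ 0 := by simp [hφ0]
    exact hcont (Ioi_mem_nhds h1)
  have hF : ∀ᶠ t in nhds (0:ℝ), vElem (Xvar f φ Φ t) x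
      = (1 + t * f x + φ t) ^ (n - 1)
          * Real.sqrt ((1 + t * f x + φ t) ^ 2 + t ^ 2 * gradSq Φ f x) * vElem Φ x := by
    filter_upwards [hapos] with t ht
    exact vElem_Xvar U hU f φ Φ t hfd hΦd hsph hx hn (himm x hx) ht
  exact aux_deriv2 n hn (f x) (gradSq Φ f x) (vElem Φ x) φ
    (fun t => vElem (Xvar f φ Φ t) x) hφ0 hd1 hd2 hF
end
end

section
/- For every x ∈ U, the second derivative of the unit normal at t = 0 is ∂²N(t,x)/∂t² |_{t=0} = 2 (f(x) + φ'(0)) ∇f(x) − |∇f(x)|² Φ(x). -/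
open MeasureTheory Real Set
open scoped RealInnerProductSpace

noncomputable section

lemma inner_sum_smul {n m : ℕ} (c d : Fin n → ℝ) (P : Fin n → En m) :
    ⟪∑ i, c i • P i, ∑ j, d j • P j⟫ = ∑ i, ∑ j, c i * d j * ⟪P i, P j⟫ := by
  rw [sum_inner]
  refine Finset.sum_congr rfl fun i _ => ?_
  rw [inner_sum]
  refine Finset.sum_congr rfl fun j _ => ?_
  rw [real_inner_smul_left, real_inner_smul_right]; ring


lemma span_key {n : ℕ} (Φx : En (n+1)) (P : Fin n → En (n+1)) (hΦ1 : ⟪Φx, Φx⟫ = 1)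
    (horth : ∀ i, ⟪Φx, P i⟫ = 0)
    (hpos : (Matrix.of fun i j => ⟪P i, P j⟫ : Matrix (Fin n) (Fin n) ℝ).PosDef)
    (w : En (n+1)) (hw0 : ⟪w, Φx⟫ = 0) (hwi : ∀ i, ⟪w, P i⟫ = 0) : w = 0 := by
  have hPind : LinearIndependent ℝ P := by
    rw [Fintype.linearIndependent_iff]
    intro c hc
    by_contra hne
    push_neg at hne
    obtain ⟨i, hi⟩ := hne
    have hcne : c ≠ 0 := fun h => hi (by simp [h])
    have hlt := hpos.dotProduct_mulVec_pos hcne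
    have hquad : (dotProduct (star c) ((Matrix.of fun i j => ⟪P i, P j⟫ : Matrix (Fin n) (Fin n) ℝ).mulVec c)) = ⟪∑ i, c i • P i, ∑ j, c j • P j⟫ := by
      rw [inner_sum_smul]
      simp only [dotProduct, Matrix.mulVec, Matrix.of_apply, Pi.star_apply, star_trivial]
      refine Finset.sum_congr rfl fun i _ => ?_
      rw [Finset.mul_sum]
      exact Finset.sum_congr rfl fun j _ => by ring
    rw [hquad, hc] at hlt
    simp at hlt
  have hb : LinearIndependent ℝ (Fin.cons Φx P : Fin (n+1) → En (n+1)) := by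
    rw [linearIndependent_fin_cons]
    refine ⟨hPind, fun hmem => ?_⟩
    obtain ⟨c, hc⟩ := (Submodule.mem_span_range_iff_exists_fun ℝ).1 hmem
    have h0 : ⟪Φx, Φx⟫ = 0 := by
      have h1 : ⟪Φx, ∑ i, c i • P i⟫ = 0 := by
        rw [inner_sum]
        refine Finset.sum_eq_zero fun i _ => ?_
        rw [real_inner_smul_right, horth i, mul_zero]
      rwa [hc] at h1
    rw [hΦ1] at h0; norm_num at h0
  have hspan : Submodule.span ℝ (Set.range (Fin.cons Φx P : Fin (n+1) → En (n+1))) = ⊤ :=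
    hb.span_eq_top_of_card_eq_finrank (by simp [finrank_euclideanSpace_fin])
  have hwmem : w ∈ Submodule.span ℝ (Set.range (Fin.cons Φx P : Fin (n+1) → En (n+1))) := by
    rw [hspan]; trivial
  obtain ⟨c, hc⟩ := (Submodule.mem_span_range_iff_exists_fun ℝ).1 hwmem
  have h0 : ⟪w, w⟫ = 0 := by
    have h1 : ⟪w, ∑ i, c i • (Fin.cons Φx P : Fin (n+1) → En (n+1)) i⟫ = 0 := by
      rw [inner_sum]
      refine Finset.sum_eq_zero fun i _ => ?_
      rw [real_inner_smul_right]
      have h2 : ⟪w, (Fin.cons Φx P : Fin (n+1) → En (n+1)) i⟫ = 0 := by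
        refine Fin.cases ?_ ?_ i
        · simpa using hw0
        · intro j; simpa using hwi j
      rw [h2, mul_zero]
    rwa [hc] at h1
  exact inner_self_eq_zero.1 h0

lemma sph_orth {n : ℕ} (Φ : En n → En (n + 1)) (x : En n) (hΦ : DifferentiableAt ℝ Φ x)
    (h1 : ∀ᶠ y in nhds x, ⟪Φ y, Φ y⟫ = 1) (i : Fin n) : ⟪Φ x, pd i Φ x⟫ = 0 := by
  have hD : HasFDerivAt (fun y => ⟪Φ y, Φ y⟫)
      ((fderivInnerCLM ℝ (Φ x, Φ x)).comp ((fderiv ℝ Φ x).prod (fderiv ℝ Φ x))) x :=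
    (hΦ.hasFDerivAt).inner ℝ hΦ.hasFDerivAt
  have hE : HasFDerivAt (fun y => ⟪Φ y, Φ y⟫) (0 : En n →L[ℝ] ℝ) x := by
    apply (hasFDerivAt_const (1:ℝ) x).congr_of_eventuallyEq
    filter_upwards [h1] with y hy using hy
  have h0 := hD.unique hE
  have := congrFun (congrArg DFunLike.coe h0) (EuclideanSpace.single i 1)
  simp only [ContinuousLinearMap.comp_apply, ContinuousLinearMap.prod_apply,
    fderivInnerCLM_apply, ContinuousLinearMap.zero_apply] at this
  have hcomm : ⟪fderiv ℝ Φ x (EuclideanSpace.single i 1), Φ x⟫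
      = ⟪Φ x, fderiv ℝ Φ x (EuclideanSpace.single i 1)⟫ := real_inner_comm _ _
  rw [hcomm] at this
  have : (2:ℝ) * ⟪Φ x, pd i Φ x⟫ = 0 := by rw [pd]; linarith
  linarith


lemma gradV_inner_pd {n : ℕ} (Φ : En n → En (n + 1)) (f : En n → ℝ) (x : En n)
    (hpos : (gmet Φ x).PosDef) (k : Fin n) :
    ⟪gradV Φ f x, pd k Φ x⟫ = pd k f x := by
  have hdet : IsUnit (gmet Φ x).det := isUnit_iff_ne_zero.2 (ne_of_gt hpos.det_pos)
  have hinv : (gmet Φ x)⁻¹ * gmet Φ x = 1 := Matrix.nonsing_inv_mul _ hdet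
  rw [gradV, sum_inner]
  have step : ∀ i : Fin n, ⟪∑ j, ((gmet Φ x)⁻¹ i j * pd i f x) • pd j Φ x, pd k Φ x⟫
      = pd i f x * ((gmet Φ x)⁻¹ * gmet Φ x) i k := by
    intro i
    rw [sum_inner, Matrix.mul_apply, Finset.mul_sum]
    refine Finset.sum_congr rfl fun j _ => ?_
    rw [real_inner_smul_left]
    simp [gmet]; ring
  simp only [step, hinv]
  simp [Matrix.one_apply]

lemma gradV_inner_base {n : ℕ} (Φ : En n → En (n + 1)) (f : En n → ℝ) (x : En n)
    (horth : ∀ j, ⟪Φ x, pd j Φ x⟫ = 0) : ⟪gradV Φ f x, Φ x⟫ = 0 := by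
  rw [gradV, sum_inner]
  refine Finset.sum_eq_zero fun i _ => ?_
  rw [sum_inner]
  refine Finset.sum_eq_zero fun j _ => ?_
  rw [real_inner_smul_left, real_inner_comm, horth j, mul_zero]

lemma gradV_inner_self {n : ℕ} (Φ : En n → En (n + 1)) (f : En n → ℝ) (x : En n)
    (hpos : (gmet Φ x).PosDef) : ⟪gradV Φ f x, gradV Φ f x⟫ = gradSq Φ f x := by
  have h : ∀ j, ⟪pd j Φ x, gradV Φ f x⟫ = pd j f x := fun j => by
    rw [real_inner_comm]; exact gradV_inner_pd Φ f x hpos j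
  nth_rewrite 1 [gradV]
  rw [sum_inner, gradSq]
  refine Finset.sum_congr rfl fun i _ => ?_
  rw [sum_inner]
  refine Finset.sum_congr rfl fun j _ => ?_
  rw [real_inner_smul_left, h j]

/-- `∂²N/∂t² |_(t=0) = 2 (f + φ'(0)) ∇f − |∇f|² Φ`. -/
theorem second_variation_normal {n : ℕ} (hn : 1 ≤ n) (U : Set (En n)) (hU : IsOpen U)
    (Φ : En n → En (n + 1)) (f : En n → ℝ) (φ : ℝ → ℝ) (ε : ℝ) (hε : 0 < ε)
    (hΦ : ContDiffOn ℝ (⊤ : ℕ∞) Φ U) (hf : ContDiffOn ℝ (⊤ : ℕ∞) f U)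
    (hφ : ContDiffOn ℝ (⊤ : ℕ∞) φ (Ioo (-ε) ε)) (hφ0 : φ 0 = 0)
    (hsph : ∀ x ∈ U, ‖Φ x‖ = 1)
    (himm : ∀ x ∈ U, (gmet Φ x).PosDef)
    (N : ℝ → En n → En (n + 1))
    (hNsm : ContDiffOn ℝ (⊤ : ℕ∞) (fun p : ℝ × En n => N p.1 p.2) (Ioo (-ε) ε ×ˢ U))
    (hNunit : ∀ t ∈ Ioo (-ε) ε, ∀ x ∈ U, ‖N t x‖ = 1)
    (hNorth : ∀ t ∈ Ioo (-ε) ε, ∀ x ∈ U, ∀ i : Fin n, ⟪N t x, pd i (Xvar f φ Φ t) x⟫ = 0)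
    (hN0 : ∀ x ∈ U, N 0 x = Φ x) :
    ∀ x ∈ U,
      deriv (deriv (fun t => N t x)) 0
        = (2 * (f x + deriv φ 0)) • gradV Φ f x - gradSq Φ f x • Φ x := by
  intro x hx
  have hmemU : U ∈ nhds x := hU.mem_nhds hx
  have hΦd : DifferentiableAt ℝ Φ x := (hΦ.contDiffAt hmemU).differentiableAt (by simp)
  have hfd : DifferentiableAt ℝ f x := (hf.contDiffAt hmemU).differentiableAt (by simp)
  have h0I : (0:ℝ) ∈ Ioo (-ε) ε := ⟨by linarith, hε⟩
  have hIopen : IsOpen (Ioo (-ε) ε) := isOpen_Ioo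
  have hInhds : Ioo (-ε) ε ∈ nhds (0:ℝ) := hIopen.mem_nhds h0I
  -- sphere facts
  have hsph1 : ∀ᶠ y in nhds x, ⟪Φ y, Φ y⟫ = 1 := by
    filter_upwards [hmemU] with y hy
    rw [real_inner_self_eq_norm_sq, hsph y hy]; norm_num
  have hΦ1 : ⟪Φ x, Φ x⟫ = 1 := hsph1.self_of_nhds
  have horthP : ∀ i, ⟪Φ x, pd i Φ x⟫ = 0 := fun i => sph_orth Φ x hΦd hsph1 i
  have hpos : (gmet Φ x).PosDef := himm x hx
  -- φ facts
  have hφd : ∀ t ∈ Ioo (-ε) ε, HasDerivAt φ (deriv φ t) t := fun t ht =>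
    ((hφ.contDiffAt (hIopen.mem_nhds ht)).differentiableAt (by simp)).hasDerivAt
  have hφ'cd : ContDiffOn ℝ (⊤ : ℕ∞) (deriv φ) (Ioo (-ε) ε) := hφ.deriv_of_isOpen hIopen (by simp)
  have hφ'' : HasDerivAt (deriv φ) (deriv (deriv φ) 0) 0 :=
    ((hφ'cd.contDiffAt hInhds).differentiableAt (by simp)).hasDerivAt
  set φ2 : ℝ := deriv (deriv φ) 0 with hφ2def
  set a : ℝ := f x + deriv φ 0 with hadef
  -- n facts
  set nf : ℝ → En (n+1) := fun t => N t x with hnfdef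
  have hncd : ContDiffOn ℝ (⊤ : ℕ∞) nf (Ioo (-ε) ε) :=
    hNsm.comp ((contDiff_id.prodMk contDiff_const).contDiffOn) (fun t ht => ⟨ht, hx⟩)
  have hnd : ∀ t ∈ Ioo (-ε) ε, HasDerivAt nf (deriv nf t) t := fun t ht =>
    ((hncd.contDiffAt (hIopen.mem_nhds ht)).differentiableAt (by simp)).hasDerivAt
  have hn'cd : ContDiffOn ℝ (⊤ : ℕ∞) (deriv nf) (Ioo (-ε) ε) := hncd.deriv_of_isOpen hIopen (by simp)
  have hn'' : HasDerivAt (deriv nf) (deriv (deriv nf) 0) 0 :=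
    ((hn'cd.contDiffAt hInhds).differentiableAt (by simp)).hasDerivAt
  set n1 : En (n+1) := deriv nf 0 with hn1def
  set n2 : En (n+1) := deriv (deriv nf) 0 with hn2def
  have hn0 : nf 0 = Φ x := hN0 x hx
  -- rho
  set ρ : ℝ → ℝ := fun t => 1 + t * f x + φ t with hρdef
  have hρd : ∀ t ∈ Ioo (-ε) ε, HasDerivAt ρ (f x + deriv φ t) t := by
    intro t ht
    have h2 := ((hasDerivAt_id t).mul_const (f x)).add (hφd t ht)
    have h3 := h2.const_add (1:ℝ)
    simpa [hρdef, add_assoc] using h3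
  have hρ0 : ρ 0 = 1 := by simp [hρdef, hφ0]
  have hρ'' : HasDerivAt (fun t => f x + deriv φ t) φ2 0 := by
    simpa using (hφ''.const_add (f x))
  -- unit norm consequences
  have hunit : ∀ t ∈ Ioo (-ε) ε, ⟪nf t, nf t⟫ = 1 := by
    intro t ht
    rw [real_inner_self_eq_norm_sq]
    have : ‖nf t‖ = 1 := hNunit t ht x hx
    rw [this]; norm_num
  have hu1 : ∀ t ∈ Ioo (-ε) ε, ⟪nf t, deriv nf t⟫ + ⟪deriv nf t, nf t⟫ = 0 := by
    intro t ht
    have hD : HasDerivAt (fun s => ⟪nf s, nf s⟫) (⟪nf t, deriv nf t⟫ + ⟪deriv nf t, nf t⟫) t :=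
      (hnd t ht).inner ℝ (hnd t ht)
    have hE : HasDerivAt (fun s => ⟪nf s, nf s⟫) 0 t := by
      apply (hasDerivAt_const t (1:ℝ)).congr_of_eventuallyEq
      filter_upwards [hIopen.mem_nhds ht] with s hs using hunit s hs
    exact hD.unique hE
  have hn1Φ : ⟪n1, Φ x⟫ = 0 := by
    have h := hu1 0 h0I
    rw [hn0, ← hn1def] at h
    rw [real_inner_comm] at h
    linarith
  have hn2Φ : ⟪n2, Φ x⟫ = -⟪n1, n1⟫ := by
    have hD : HasDerivAt (fun t => ⟪nf t, deriv nf t⟫ + ⟪deriv nf t, nf t⟫)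
        ((⟪nf 0, n2⟫ + ⟪n1, deriv nf 0⟫) + (⟪deriv nf 0, n1⟫ + ⟪n2, nf 0⟫)) 0 :=
      ((hnd 0 h0I).inner ℝ hn'').add (hn''.inner ℝ (hnd 0 h0I))
    have hE : HasDerivAt (fun t => ⟪nf t, deriv nf t⟫ + ⟪deriv nf t, nf t⟫) 0 0 := by
      apply (hasDerivAt_const 0 (0:ℝ)).congr_of_eventuallyEq
      filter_upwards [hInhds] with s hs using hu1 s hs
    have h := hD.unique hE
    rw [hn0, ← hn1def] at h
    linarith [real_inner_comm (Φ x) n2]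
  -- orthogonality consequences
  have hm_or : ∀ t ∈ Ioo (-ε) ε, ∀ i : Fin n, ⟪nf t, (t * pd i f x) • Φ x + ρ t • pd i Φ x⟫ = 0 := by
    intro t ht i
    have h := hNorth t ht x hx i
    rw [pd_Xvar f φ Φ t x hfd hΦd i] at h
    exact h
  have hmd : ∀ t ∈ Ioo (-ε) ε, ∀ i : Fin n,
      HasDerivAt (fun s => (s * pd i f x) • Φ x + ρ s • pd i Φ x)
        (pd i f x • Φ x + (f x + deriv φ t) • pd i Φ x) t := by
    intro t ht i
    have h1 : HasDerivAt (fun s : ℝ => (s * pd i f x) • Φ x) (pd i f x • Φ x) t := by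
      simpa using ((hasDerivAt_id t).mul_const (pd i f x)).smul_const (Φ x)
    exact h1.add ((hρd t ht).smul_const (pd i Φ x))
  have hor1 : ∀ t ∈ Ioo (-ε) ε, ∀ i : Fin n,
      ⟪nf t, pd i f x • Φ x + (f x + deriv φ t) • pd i Φ x⟫
        + ⟪deriv nf t, (t * pd i f x) • Φ x + ρ t • pd i Φ x⟫ = 0 := by
    intro t ht i
    have hD := (hnd t ht).inner ℝ (hmd t ht i)
    have hE : HasDerivAt (fun s => ⟪nf s, (s * pd i f x) • Φ x + ρ s • pd i Φ x⟫) 0 t := by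
      apply (hasDerivAt_const t (0:ℝ)).congr_of_eventuallyEq
      filter_upwards [hIopen.mem_nhds ht] with s hs using hm_or s hs i
    exact hD.unique hE
  have hn1P : ∀ i : Fin n, ⟪n1, pd i Φ x⟫ = - pd i f x := by
    intro i
    have h := hor1 0 h0I i
    rw [hn0, ← hn1def, hρ0] at h
    simp only [inner_add_right, real_inner_smul_right, hΦ1, horthP, zero_mul, zero_smul,
      zero_add, one_smul, mul_zero, add_zero, mul_one] at h
    linarith
  have hn2P : ∀ i : Fin n, ⟪n2, pd i Φ x⟫ = 2 * a * pd i f x := by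
    intro i
    have hmm1 : HasDerivAt (fun t => pd i f x • Φ x + (f x + deriv φ t) • pd i Φ x)
        (φ2 • pd i Φ x) 0 := by
      simpa using (hρ''.smul_const (pd i Φ x)).const_add (pd i f x • Φ x)
    have hD : HasDerivAt (fun t => ⟪nf t, pd i f x • Φ x + (f x + deriv φ t) • pd i Φ x⟫
          + ⟪deriv nf t, (t * pd i f x) • Φ x + ρ t • pd i Φ x⟫)
        ((⟪nf 0, φ2 • pd i Φ x⟫ + ⟪n1, pd i f x • Φ x + (f x + deriv φ 0) • pd i Φ x⟫)
          + (⟪deriv nf 0, pd i f x • Φ x + (f x + deriv φ 0) • pd i Φ x⟫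
            + ⟪n2, (0 * pd i f x) • Φ x + ρ 0 • pd i Φ x⟫)) 0 :=
      ((hnd 0 h0I).inner ℝ hmm1).add (hn''.inner ℝ (hmd 0 h0I i))
    have hE : HasDerivAt (fun t => ⟪nf t, pd i f x • Φ x + (f x + deriv φ t) • pd i Φ x⟫
          + ⟪deriv nf t, (t * pd i f x) • Φ x + ρ t • pd i Φ x⟫) 0 0 := by
      apply (hasDerivAt_const 0 (0:ℝ)).congr_of_eventuallyEq
      filter_upwards [hInhds] with s hs using hor1 s hs i
    have h := hD.unique hE
    rw [hn0, ← hn1def, hρ0] at h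
    simp only [inner_add_right, real_inner_smul_right, hΦ1, horthP, zero_mul, zero_smul,
      zero_add, one_smul, mul_zero, add_zero, mul_one, hn1Φ, hn1P] at h
    rw [← hadef] at h
    linarith
  -- gradV identities
  have hgV0 : ⟪gradV Φ f x, Φ x⟫ = 0 := gradV_inner_base Φ f x horthP
  have hgVP : ∀ k, ⟪gradV Φ f x, pd k Φ x⟫ = pd k f x := fun k => gradV_inner_pd Φ f x hpos k
  have hn1eq : n1 = - gradV Φ f x := by
    have hw : n1 + gradV Φ f x = 0 := by
      apply span_key (Φ x) (fun i => pd i Φ x) hΦ1 horthP hpos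
      · rw [inner_add_left, hn1Φ, hgV0]; ring
      · intro i; rw [inner_add_left, hn1P i, hgVP i]; ring
    exact eq_neg_of_add_eq_zero_left hw
  have hn1sq : ⟪n1, n1⟫ = gradSq Φ f x := by
    rw [hn1eq, inner_neg_neg, gradV_inner_self Φ f x hpos]
  -- final
  have hfinal : n2 - ((2 * a) • gradV Φ f x - gradSq Φ f x • Φ x) = 0 := by
    apply span_key (Φ x) (fun i => pd i Φ x) hΦ1 horthP hpos
    · rw [inner_sub_left, inner_sub_left, real_inner_smul_left, real_inner_smul_left,
        hn2Φ, hgV0, hΦ1, hn1sq]; ring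
    · intro i
      rw [inner_sub_left, inner_sub_left, real_inner_smul_left, real_inner_smul_left,
        hn2P i, hgVP i, horthP i]; ring
  have := sub_eq_zero.1 hfinal
  exact this
end
end
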